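/- arXiv:1012.4017 — 8 statements merged into one kernel-verified Lean document; each statement's English description precedes it below -/
import Mathlib

section
/- If a graph G has the property that every finite subgraph of G is k-colorable, then G itself is k-colorable (de Bruijn–Erdős theorem). -/
/-- de Bruijn–Erdős: if every finite (induced) subgraph of `G` is `k`-colorable,
then `G` is `k`-colorable. -/
theorem deBruijn_Erdos {V : Type*} (G : SimpleGraph V) (k : ℕ)
    (h : ∀ s : Finset V, (G.induce (↑s : Set V)).Colorable k) :
    G.Colorable k := by
  have key : Nonempty (G →g (⊤ : SimpleGraph (Fin k))) := by
    apply SimpleGraph.nonempty_hom_of_forall_finite_subgraph_hom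
    intro G' hfin
    haveI : Fintype G'.verts := hfin.fintype
    have C := (h G'.verts.toFinset).some
    exact
      { toFun := fun v => C ⟨v.1, by simp [v.2]⟩
        map_rel' := by
          intro a b hab
          exact C.valid (by exact G'.adj_sub hab) }
  obtain ⟨f⟩ := key
  exact ⟨f⟩
end

section
/- There do not exist d+2 nondegenerate d-simplices in ℝ^d, with pairwise disjoint interiors, such that every pair of them shares a common (d−1)-dimensional facet (i.e., the dual graph of a pure d-dimensional simplicial complex in ℝ^d does not contain K_{d+2} as a subgraph). -/
/-!
If two simplices `insert p F` and `insert q F` meet only in `conv F`, their apexes lie on opposite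
sides of the hyperplane through `F`, so no three of the simplices contain a common facet. Then
`d + 2` sets of size `d + 1` pairwise meeting in `d` points must be the sets `U \ {u}` of a single
`(d + 2)`-set `U`. Both the opposite-sides property and the exclusion of this last configuration
come from Radon's theorem: an affine dependence yields disjoint vertex sets `I ⊆ A`, `J ⊆ B` of two
of the simplices whose hulls meet, whereas in two simplices with `conv A ∩ conv B = conv (A ∩ B)`
faces with disjoint vertex sets are disjoint.
-/

open scoped Classical

/-- A nondegenerate `d`-simplex in `ℝ^d`, given by its vertex set. -/
def IsSimplex (d : ℕ) (V : Finset (EuclideanSpace ℝ (Fin d))) : Prop :=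
  V.card = d + 1 ∧
    AffineIndependent ℝ (fun x : V => (x : EuclideanSpace ℝ (Fin d)))

/-- Two `d`-simplices share a `(d-1)`-facet: they have exactly `d` common vertices and
their intersection is the convex hull of those common vertices. -/
def SharesFacet (d : ℕ) (V W : Finset (EuclideanSpace ℝ (Fin d))) : Prop :=
  (V ∩ W).card = d ∧
    convexHull ℝ (V : Set (EuclideanSpace ℝ (Fin d))) ∩
        convexHull ℝ (W : Set (EuclideanSpace ℝ (Fin d))) =
      convexHull ℝ ((V ∩ W : Finset (EuclideanSpace ℝ (Fin d))) : Set (EuclideanSpace ℝ (Fin d)))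

open Finset

section Combinatorics

variable {α : Type*} [DecidableEq α]

theorem Finset.union_eq_of_ne_of_card_eq {s t u : Finset α} (hs : s ⊆ u) (ht : t ⊆ u)
    (hst : s ≠ t) (hcard : #s = #t) (hu : #u = #s + 1) : s ∪ t = u := by
  have hlt : #s < #(s ∪ t) := by
    refine card_lt_card (ssubset_iff_subset_ne.2 ⟨subset_union_left, fun h => hst ?_⟩)
    exact (eq_of_subset_of_card_le (h ▸ subset_union_right) hcard.le).symm
  exact eq_of_subset_of_card_le (union_subset hs ht) (by omega)

theorem Finset.subset_union_of_inter_ne {A B C : Finset α} {n : ℕ} (hC : #C = n + 1)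
    (hAB : #(A ∩ B) = n) (hAC : #(A ∩ C) = n) (hBC : #(B ∩ C) = n) (hne : A ∩ B ≠ A ∩ C) :
    C ⊆ A ∪ B := by
  have hACBC : A ∩ C ≠ B ∩ C := by
    intro h
    refine hne (eq_of_subset_of_card_le (fun x hx => ?_) (by omega)).symm
    exact mem_inter.2 ⟨(mem_inter.1 hx).1, (mem_inter.1 (h ▸ hx)).1⟩
  have hunion := union_eq_of_ne_of_card_eq inter_subset_right inter_subset_right hACBC
    (hAC.trans hBC.symm) (by rw [hAC, hC])
  rw [← hunion, ← union_inter_distrib_right]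
  exact inter_subset_left

theorem Finset.exists_eq_erase_of_injective {ι : Type*} [Fintype ι] {U : Finset α}
    {V : ι → Finset α} {n : ℕ} (hV : Function.Injective V) (hVU : ∀ i, V i ⊆ U)
    (hVcard : ∀ i, #(V i) = n) (hU : #U = n + 1) (hι : Fintype.card ι = n + 1) {u : α}
    (hu : u ∈ U) : ∃ i, V i = U.erase u := by
  have himage : univ.image V = U.powersetCard n := by
    refine eq_of_subset_of_card_le (fun s hs => ?_) ?_
    · obtain ⟨i, -, rfl⟩ := mem_image.1 hs
      exact mem_powersetCard.2 ⟨hVU i, hVcard i⟩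
    · rw [card_image_of_injective _ hV, card_powersetCard, hU, Nat.choose_succ_self_right,
        card_univ, hι]
  have hmem : U.erase u ∈ univ.image V :=
    himage ▸ mem_powersetCard.2 ⟨erase_subset u U, by rw [card_erase_of_mem hu, hU]; rfl⟩
  simpa using hmem

end Combinatorics

section ConvexGeometry

variable {E : Type*} [AddCommGroup E] [Module ℝ E]

theorem radon_partition_filter {U : Finset E} {w : E → ℝ} (hw : ∑ x ∈ U, w x = 0)
    (hwx : ∑ x ∈ U, w x • x = 0) (hne : ∃ x ∈ U, w x ≠ 0) :
    (convexHull ℝ (U.filter (0 ≤ w ·) : Set E) ∩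
      convexHull ℝ (U.filter (w · < 0) : Set E)).Nonempty := by
  have hsum : ∑ x ∈ U.filter (w · < 0), w x + ∑ x ∈ U.filter (0 ≤ w ·), w x = 0 := by
    simpa only [hw, not_lt] using sum_filter_add_sum_filter_not U (w · < 0) w
  obtain ⟨a, haU, ha⟩ := exists_pos_of_sum_zero_of_exists_nonzero w hw hne
  have hpos : 0 < ∑ x ∈ U.filter (0 ≤ w ·), w x :=
    sum_pos' (fun x hx => (mem_filter.1 hx).2) ⟨a, mem_filter.2 ⟨haU, ha.le⟩, ha⟩
  have hcenter : (U.filter (w · < 0)).centerMass w id = (U.filter (0 ≤ w ·)).centerMass w id :=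
    centerMass_of_sum_add_sum_eq_zero hsum <| by
      simpa only [hwx, not_lt, id_eq] using
        sum_filter_add_sum_filter_not U (w · < 0) (fun x => w x • x)
  refine ⟨(U.filter (0 ≤ w ·)).centerMass w id,
    centerMass_mem_convexHull _ (fun x hx => (mem_filter.1 hx).2) hpos (fun x hx => hx), ?_⟩
  rw [← hcenter]
  exact centerMass_mem_convexHull_of_nonpos _ (fun x hx => (mem_filter.1 hx).2.le)
    (by linarith) (fun x hx => hx)

theorem disjoint_convexHull_of_subset_of_subset [DecidableEq E] {A B I J : Finset E}
    (hA : AffineIndependent ℝ ((↑) : A → E)) (hB : AffineIndependent ℝ ((↑) : B → E))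
    (hAB : convexHull ℝ (A : Set E) ∩ convexHull ℝ (B : Set E) ⊆
      convexHull ℝ (↑(A ∩ B) : Set E))
    (hI : I ⊆ A) (hJ : J ⊆ B) (hIJ : Disjoint I J) :
    Disjoint (convexHull ℝ (I : Set E)) (convexHull ℝ (J : Set E)) := by
  refine Set.disjoint_left.2 fun x hxI hxJ => ?_
  have hx : x ∈ convexHull ℝ (↑(A ∩ B) : Set E) :=
    hAB ⟨convexHull_mono hI hxI, convexHull_mono hJ hxJ⟩
  have hxIAB : x ∈ convexHull ℝ (↑(I ∩ (A ∩ B)) : Set E) := by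
    rw [coe_inter, hA.convexHull_inter hI inter_subset_left]
    exact ⟨hxI, hx⟩
  have hxIJ : x ∈ convexHull ℝ (↑(I ∩ (A ∩ B) ∩ J) : Set E) := by
    rw [coe_inter, hB.convexHull_inter ((inter_subset_right).trans inter_subset_right) hJ]
    exact ⟨hxIAB, hxJ⟩
  rw [inter_right_comm, disjoint_iff_inter_eq_empty.1 hIJ] at hxIJ
  simp at hxIJ

theorem exists_sum_smul_eq_of_mem_affineSpan {Q : Finset E} {p : E}
    (hp : p ∈ affineSpan ℝ (Q : Set E)) :
    ∃ μ : E → ℝ, ∑ x ∈ Q, μ x = 1 ∧ ∑ x ∈ Q, μ x • x = p := by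
  rw [← Subtype.range_coe (s := (Q : Set E))] at hp
  obtain ⟨μ, hμ, rfl⟩ := eq_affineCombination_of_mem_affineSpan_of_fintype hp
  refine ⟨fun x => if hx : x ∈ Q then μ ⟨x, hx⟩ else 0, ?_, ?_⟩
  · rw [← hμ, ← sum_coe_sort Q]
    simp
  · rw [affineCombination_eq_linear_combination _ _ _ hμ, ← sum_coe_sort Q]
    simp

theorem AffineMap.map_sum_smul_of_sum_eq_one {ι : Type*} (ψ : E →ᵃ[ℝ] ℝ) {s : Finset ι}
    {μ : ι → ℝ} (v : ι → E) (hμ : ∑ i ∈ s, μ i = 1) :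
    ψ (∑ i ∈ s, μ i • v i) = ∑ i ∈ s, μ i * ψ (v i) := by
  rw [← affineCombination_eq_linear_combination _ _ _ hμ, map_affineCombination _ _ _ hμ,
    affineCombination_eq_linear_combination _ _ _ hμ]
  rfl

theorem AffineMap.apply_neg_of_convexHull_inter_subset [DecidableEq E] {F : Finset E} {p q : E}
    (hpF : p ∉ F) (hpq : p ≠ q) (hP : AffineIndependent ℝ ((↑) : ↥(insert p F) → E))
    (hQ : AffineIndependent ℝ ((↑) : ↥(insert q F) → E))
    (hpQ : p ∈ affineSpan ℝ (↑(insert q F) : Set E))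
    (hPQ : convexHull ℝ (↑(insert p F) : Set E) ∩ convexHull ℝ (↑(insert q F) : Set E) ⊆
      convexHull ℝ (F : Set E))
    {ψ : E →ᵃ[ℝ] ℝ} (hψF : ∀ x ∈ F, ψ x = 0) (hψq : 0 < ψ q) : ψ p < 0 := by
  obtain ⟨μ, hμ, hμp⟩ := exists_sum_smul_eq_of_mem_affineSpan hpQ
  have hψp : ψ p = μ q * ψ q :=
    calc ψ p = ∑ x ∈ insert q F, μ x * ψ x := hμp ▸ ψ.map_sum_smul_of_sum_eq_one _ hμ
      _ = μ q * ψ q := sum_eq_single_of_mem q (mem_insert_self q F) fun x hx hxq => by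
        rw [hψF x ((mem_insert.1 hx).resolve_left hxq), mul_zero]
  by_contra! hψp_nonneg
  have hμq : 0 ≤ μ q := nonneg_of_mul_nonneg_left (hψp ▸ hψp_nonneg) hψq
  have hpQ' : p ∉ insert q F := by simp [hpF, hpq]
  set w := Function.update μ p (-1)
  have hwQ : ∀ x ∈ insert q F, w x = μ x := fun x hx =>
    Function.update_of_ne (by rintro rfl; exact hpQ' hx) _ _
  obtain ⟨x, hxI, hxJ⟩ := radon_partition_filter (U := insert p (insert q F)) (w := w)
    (by rw [sum_insert hpQ', sum_congr rfl hwQ, hμ]; simp [w])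
    (by rw [sum_insert hpQ', sum_congr rfl fun x hx => by rw [hwQ x hx], hμp]; simp [w])
    ⟨p, mem_insert_self _ _, by simp [w]⟩
  -- As `μ q ≥ 0`, the negative part of this dependence lies in `insert p F` and the nonnegative
  -- part in `insert q F`.
  refine Set.disjoint_left.1 (disjoint_convexHull_of_subset_of_subset hQ hP ?_ ?_ ?_ ?_) hxI hxJ
  · rw [Set.inter_comm]
    exact hPQ.trans <| convexHull_mono <|
      coe_subset.2 (subset_inter (subset_insert q F) (subset_insert p F))
  · intro x hx
    obtain ⟨hxU, hwx⟩ := mem_filter.1 hx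
    refine (mem_insert.1 hxU).resolve_left ?_
    rintro rfl
    norm_num [w] at hwx
  · intro x hx
    obtain ⟨hxU, hwx⟩ := mem_filter.1 hx
    rcases mem_insert.1 hxU with rfl | hxQ
    · exact mem_insert_self _ _
    · rw [hwQ x hxQ] at hwx
      refine mem_insert_of_mem ((mem_insert.1 hxQ).resolve_left ?_)
      rintro rfl
      linarith
  · exact disjoint_filter.2 fun x _ h1 h2 => (not_lt.2 h1) h2

end ConvexGeometry

section Simplices

variable {d : ℕ}

theorem SharesFacet.ne {A B : Finset (EuclideanSpace ℝ (Fin d))} (h : SharesFacet d A B)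
    (hB : IsSimplex d B) : A ≠ B := by
  rintro rfl
  have := h.1
  rw [inter_self, hB.1] at this
  omega

theorem IsSimplex.affineSpan_eq_top {s : Finset (EuclideanSpace ℝ (Fin d))} (h : IsSimplex d s) :
    affineSpan ℝ (s : Set (EuclideanSpace ℝ (Fin d))) = ⊤ := by
  simpa using h.2.affineSpan_eq_top_iff_card_eq_finrank_add_one.2 (by simp [h.1])

theorem IsSimplex.mem_affineSpan {s : Finset (EuclideanSpace ℝ (Fin d))} (h : IsSimplex d s)
    (x : EuclideanSpace ℝ (Fin d)) : x ∈ affineSpan ℝ (s : Set (EuclideanSpace ℝ (Fin d))) :=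
  h.affineSpan_eq_top ▸ AffineSubspace.mem_top ℝ _ x

theorem inter_ne_inter_of_sharesFacet {A B C : Finset (EuclideanSpace ℝ (Fin d))}
    (hA : IsSimplex d A) (hB : IsSimplex d B) (hC : IsSimplex d C) (hAB : SharesFacet d A B)
    (hAC : SharesFacet d A C) (hBC : SharesFacet d B C) : A ∩ B ≠ A ∩ C := by
  intro hABC
  obtain ⟨F, hFAB⟩ : ∃ F, A ∩ B = F := ⟨_, rfl⟩
  have hFAC : A ∩ C = F := hABC ▸ hFAB
  have hFcard : #F = d := hFAB ▸ hAB.1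
  have hFBC : B ∩ C = F := (eq_of_subset_of_card_le (subset_inter (hFAB ▸ inter_subset_right)
    (hFAC ▸ inter_subset_right)) (by rw [hBC.1, hFcard])).symm
  have apex : ∀ {X}, IsSimplex d X → F ⊆ X → ∃ x ∉ F, insert x F = X := fun hX hFX =>
    exists_eq_insert_iff.2 ⟨hFX, by rw [hFcard, hX.1]⟩
  obtain ⟨r, hrF, rfl⟩ := apex hA (hFAB ▸ inter_subset_left)
  obtain ⟨p, hpF, rfl⟩ := apex hB (hFAB ▸ inter_subset_right)
  obtain ⟨q, hqF, rfl⟩ := apex hC (hFAC ▸ inter_subset_right)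
  have hne : ∀ {x y}, x ∉ F → insert x F ∩ insert y F = F → x ≠ y := by
    rintro x y hx h rfl
    rw [inter_self] at h
    exact hx (h ▸ mem_insert_self x F)
  have hcap : ∀ {X Y}, SharesFacet d X Y → X ∩ Y = F →
      convexHull ℝ (X : Set (EuclideanSpace ℝ (Fin d))) ∩ convexHull ℝ ↑Y ⊆ convexHull ℝ ↑F :=
    fun h hXY => by rw [h.2, hXY]
  let b : AffineBasis ↥(insert r F) ℝ (EuclideanSpace ℝ (Fin d)) :=
    ⟨(↑), hA.2, by rw [Subtype.range_coe]; exact hA.affineSpan_eq_top⟩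
  set ψ := b.coord ⟨r, mem_insert_self r F⟩
  have hψF : ∀ x ∈ F, ψ x = 0 := fun x hx =>
    b.coord_apply_ne (j := ⟨x, mem_insert_of_mem hx⟩) (by rintro ⟨⟩; exact hrF hx)
  have hψr : 0 < ψ r := (b.coord_apply_eq _).symm ▸ one_pos
  -- `p` and `q` both lie on the negative side of `ψ`, yet on opposite sides of each other.
  have hψp := AffineMap.apply_neg_of_convexHull_inter_subset hpF (hne hrF hFAB).symm hB.2 hA.2
    (hA.mem_affineSpan p) ((Set.inter_comm _ _).subset.trans (hcap hAB hFAB)) hψF hψr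
  have hψq := AffineMap.apply_neg_of_convexHull_inter_subset hqF (hne hrF hFAC).symm hC.2 hA.2
    (hA.mem_affineSpan q) ((Set.inter_comm _ _).subset.trans (hcap hAC hFAC)) hψF hψr
  have hψp' := AffineMap.apply_neg_of_convexHull_inter_subset (ψ := -ψ) hpF (hne hpF hFBC)
    hB.2 hC.2 (hC.mem_affineSpan p) (hcap hBC hFBC) (by simpa using hψF) (by simpa using hψq)
  simp only [AffineMap.coe_neg, Pi.neg_apply, neg_lt_zero] at hψp'
  linarith

theorem not_pairwise_sharesFacet_erase {U : Finset (EuclideanSpace ℝ (Fin d))}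
    (hU : d + 1 < #U) (hsimp : ∀ u ∈ U, IsSimplex d (U.erase u)) :
    ¬ ∀ a ∈ U, ∀ b ∈ U, a ≠ b → SharesFacet d (U.erase a) (U.erase b) := by
  intro hshare
  obtain ⟨w, hwx, hw, hne⟩ := Module.exists_nontrivial_relation_sum_zero_of_finrank_succ_lt_card
    (R := ℝ) (t := U) (by rwa [finrank_euclideanSpace_fin])
  obtain ⟨x, hxI, hxJ⟩ := radon_partition_filter hw hwx hne
  obtain ⟨a, ha⟩ := convexHull_nonempty_iff.1 ⟨x, hxI⟩
  obtain ⟨b, hb⟩ := convexHull_nonempty_iff.1 ⟨x, hxJ⟩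
  rw [mem_coe, mem_filter] at ha hb
  have hab : a ≠ b := by
    rintro rfl
    linarith [ha.2, hb.2]
  refine Set.disjoint_left.1 (disjoint_convexHull_of_subset_of_subset (hsimp b hb.1).2
    (hsimp a ha.1).2 (hshare b hb.1 a ha.1 hab.symm).2.subset ?_ ?_ ?_) hxI hxJ
  · intro y hy
    rw [mem_filter] at hy
    exact mem_erase.2 ⟨by rintro rfl; linarith [hy.2, hb.2], hy.1⟩
  · intro y hy
    rw [mem_filter] at hy
    exact mem_erase.2 ⟨by rintro rfl; linarith [hy.2, ha.2], hy.1⟩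
  · exact disjoint_filter.2 fun y _ h1 h2 => (not_lt.2 h1) h2

end Simplices

theorem no_Kd2_general (d : ℕ) :
    ¬ ∃ V : Fin (d + 2) → Finset (EuclideanSpace ℝ (Fin d)),
      (∀ i, IsSimplex d (V i)) ∧
      (∀ i j, i ≠ j →
        Disjoint (interior (convexHull ℝ (V i : Set (EuclideanSpace ℝ (Fin d)))))
          (interior (convexHull ℝ (V j : Set (EuclideanSpace ℝ (Fin d)))))) ∧
      (∀ i j, i ≠ j → SharesFacet d (V i) (V j)) := by
  rintro ⟨V, hV, -, hVV⟩
  have hVinj : Function.Injective V := fun i j hij =>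
    by_contra fun hne => (hVV i j hne).ne (hV j) hij
  have h01 : (0 : Fin (d + 2)) ≠ 1 := by simp
  have hU : #(V 0 ∪ V 1) = d + 2 := by
    have := card_union_add_card_inter (V 0) (V 1)
    rw [(hV 0).1, (hV 1).1, (hVV 0 1 h01).1] at this
    omega
  set U := V 0 ∪ V 1
  have hVU : ∀ k, V k ⊆ U := by
    intro k
    by_cases hk0 : k = 0
    · exact hk0 ▸ subset_union_left
    by_cases hk1 : k = 1
    · exact hk1 ▸ subset_union_right
    exact subset_union_of_inter_ne (hV k).1 (hVV 0 1 h01).1 (hVV 0 k (Ne.symm hk0)).1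
      (hVV 1 k (Ne.symm hk1)).1 (inter_ne_inter_of_sharesFacet (hV 0) (hV 1) (hV k)
        (hVV 0 1 h01) (hVV 0 k (Ne.symm hk0)) (hVV 1 k (Ne.symm hk1)))
  have hsurj : ∀ u ∈ U, ∃ i, V i = U.erase u := fun u hu =>
    exists_eq_erase_of_injective hVinj hVU (fun i => (hV i).1) hU (Fintype.card_fin _) hu
  have hsimp : ∀ u ∈ U, IsSimplex d (U.erase u) := fun u hu => by
    obtain ⟨i, hi⟩ := hsurj u hu
    exact hi ▸ hV i
  refine not_pairwise_sharesFacet_erase (by omega) hsimp fun a ha b hb hab => ?_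
  obtain ⟨i, hi⟩ := hsurj a ha
  obtain ⟨j, hj⟩ := hsurj b hb
  refine hi ▸ hj ▸ hVV i j fun hij => hab ?_
  rw [hij, hj] at hi
  exact erase_injOn U ha hb hi.symm

/-- The dual graph of a pure `d`-dimensional simplicial complex in `ℝ^d` contains no
`K_{d+2}`: there are no `d+2` nondegenerate `d`-simplices with pairwise disjoint
interiors, every pair of which shares a `(d-1)`-facet. -/
theorem no_Kd2 (d : ℕ) (hd : 1 ≤ d) :
    ¬ ∃ V : Fin (d + 2) → Finset (EuclideanSpace ℝ (Fin d)),
      (∀ i, IsSimplex d (V i)) ∧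
      (∀ i j, i ≠ j →
        Disjoint (interior (convexHull ℝ (V i : Set (EuclideanSpace ℝ (Fin d)))))
          (interior (convexHull ℝ (V j : Set (EuclideanSpace ℝ (Fin d)))))) ∧
      (∀ i j, i ≠ j → SharesFacet d (V i) (V j)) :=
  no_Kd2_general d
end

section
/- There do not exist four nondegenerate triangles in the plane, with pairwise disjoint interiors, such that every pair of them shares a common edge (i.e., the dual graph of a pure 2-dimensional simplicial complex in ℝ² contains no K₄). -/
open scoped Classical

/-- A nondegenerate triangle in the plane, given by its vertex set. -/
def IsTriangle (V : Finset (EuclideanSpace ℝ (Fin 2))) : Prop :=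
  V.card = 3 ∧ AffineIndependent ℝ (fun x : V => (x : EuclideanSpace ℝ (Fin 2)))

/-- Two triangles share an edge: they have exactly 2 common vertices and their
intersection is the convex hull of those common vertices. -/
def SharesEdge (V W : Finset (EuclideanSpace ℝ (Fin 2))) : Prop :=
  (V ∩ W).card = 2 ∧
    convexHull ℝ (V : Set (EuclideanSpace ℝ (Fin 2))) ∩
        convexHull ℝ (W : Set (EuclideanSpace ℝ (Fin 2))) =
      convexHull ℝ ((V ∩ W : Finset (EuclideanSpace ℝ (Fin 2))) : Set (EuclideanSpace ℝ (Fin 2)))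

/-!
If two simplices `B` and `C` share the facet opposite vertex `i` and have disjoint interiors,
then `C i` lies strictly on the other side of that facet, i.e. `B.coord i (C i) < 0`: otherwise
the centroid of the facet, pushed slightly towards `B i`, lies in both interiors.

Let `abc` be one of four pairwise adjacent triangles. If two of the other three are glued to the
same edge `ab`, their third vertices `p` and `q` both lie on the side of `ab` opposite to `c`, hence
on the same side as each other, although the triangles `abp` and `abq` are adjacent along `ab`.
Otherwise they are glued to the three different edges, and since they pairwise share two vertices
they are `pbc`, `apc` and `abp` for a single apex `p`; then all three barycentric coordinates of
`p` with respect to `abc` are negative, although they sum to `1`.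
-/

open Set Filter Topology Function

namespace AffineBasis

section Ring

variable {ι k V P : Type*} [Fintype ι] [DecidableEq ι] [Ring k] [AddCommGroup V] [Module k V]
  [AddTorsor V P] {B C : AffineBasis ι k P} {i : ι} {p : P}

theorem coord_apply_of_eq_update (hC : ⇑C = update ⇑B i p) (x : P) :
    C.coord i x = B.coord i x * C.coord i (B i) := by
  conv_lhs => rw [← B.affineCombination_coord_eq_self x]
  rw [Finset.map_affineCombination _ _ _ (B.sum_coord_apply_eq_one x),
    Finset.univ.affineCombination_eq_linear_combination _ _ (B.sum_coord_apply_eq_one x),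
    Finset.sum_eq_single i]
  · simp only [comp_apply, smul_eq_mul]
  · intro j _ hj
    rw [comp_apply, show B j = C j by rw [hC, update_of_ne hj], C.coord_apply_ne hj.symm,
      smul_zero]
  · simp

theorem coord_mul_coord_of_eq_update (hC : ⇑C = update ⇑B i p) :
    B.coord i p * C.coord i (B i) = 1 := by
  rw [← coord_apply_of_eq_update hC, show p = C i by simp [hC], coord_apply_eq]

end Ring

variable {ι E : Type*} [Fintype ι] [DecidableEq ι] [Nontrivial ι] [NormedAddCommGroup E]
  [NormedSpace ℝ E]

theorem eventually_lineMap_mem_interior_convexHull (D : AffineBasis ι ℝ E) {i : ι} {q : E}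
    (hq : 0 < D.coord i q) :
    ∀ᶠ ε in 𝓝[>] (0 : ℝ), AffineMap.lineMap ((Finset.univ.erase i).centroid ℝ D) q ε ∈
      interior (convexHull ℝ (range D)) := by
  rw [D.interior_convexHull]
  simp only [mem_ofPred_eq, AffineMap.apply_lineMap]
  refine eventually_all.2 fun j => ?_
  rcases eq_or_ne j i with rfl | hj
  · have hm : D.coord j ((Finset.univ.erase j).centroid ℝ D) = 0 := by
      obtain ⟨l, hl⟩ := exists_ne j
      exact D.coord_apply_combination_of_notMem (by simp)
        (Finset.sum_centroidWeights_eq_one_of_nonempty ℝ _ ⟨l, by simpa using hl⟩)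
    filter_upwards [self_mem_nhdsWithin] with ε hε
    rw [hm, AffineMap.lineMap_apply_module, smul_zero, zero_add, smul_eq_mul]
    exact mul_pos hε hq
  · have hm : 0 < D.coord j ((Finset.univ.erase i).centroid ℝ D) := by
      rw [D.coord_apply_centroid (by simpa using hj)]
      exact inv_pos.2 (Nat.cast_pos.2 (Finset.card_pos.2 ⟨j, by simpa using hj⟩))
    refine nhdsWithin_le_nhds ?_
    exact (AffineMap.lineMap_continuous.tendsto' 0 _
      (AffineMap.lineMap_apply_zero _ _)).eventually (lt_mem_nhds hm)

variable {B C D : AffineBasis ι ℝ E} {i : ι} {p q : E}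

theorem coord_neg_of_eq_update_of_disjoint (hC : ⇑C = update ⇑B i p)
    (hBC : Disjoint (interior (convexHull ℝ (range B))) (interior (convexHull ℝ (range C)))) :
    B.coord i p < 0 := by
  have hmul := coord_mul_coord_of_eq_update hC
  by_contra! hnonneg
  have hp : 0 < B.coord i p :=
    hnonneg.lt_of_ne (by rintro h; rw [← h, zero_mul] at hmul; exact zero_ne_one hmul)
  have hBi : 0 < C.coord i (B i) := pos_of_mul_pos_right (hmul ▸ one_pos) hp.le
  have hcentroid : (Finset.univ.erase i).centroid ℝ B = (Finset.univ.erase i).centroid ℝ C :=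
    Finset.univ.erase i |>.affineCombination_congr (fun _ _ => rfl) fun j hj => by
      rw [hC, update_of_ne (Finset.ne_of_mem_erase hj)]
  have hBB : 0 < B.coord i (B i) := by rw [coord_apply_eq]; exact one_pos
  obtain ⟨ε, hεB, hεC⟩ := ((B.eventually_lineMap_mem_interior_convexHull hBB).and
    (hcentroid ▸ C.eventually_lineMap_mem_interior_convexHull hBi)).exists
  exact hBC.ne_of_mem hεB hεC rfl

theorem false_of_eq_update_of_disjoint (hC : ⇑C = update ⇑B i p) (hD : ⇑D = update ⇑B i q)
    (hBC : Disjoint (interior (convexHull ℝ (range B))) (interior (convexHull ℝ (range C))))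
    (hBD : Disjoint (interior (convexHull ℝ (range B))) (interior (convexHull ℝ (range D))))
    (hCD : Disjoint (interior (convexHull ℝ (range C))) (interior (convexHull ℝ (range D)))) :
    False := by
  have hp := coord_neg_of_eq_update_of_disjoint hC hBC
  have hq := coord_neg_of_eq_update_of_disjoint hD hBD
  have hCq := coord_neg_of_eq_update_of_disjoint (by rw [hD, hC, update_idem]) hCD
  have hmul := coord_mul_coord_of_eq_update hC
  rw [coord_apply_of_eq_update hC] at hCq
  nlinarith

theorem false_of_forall_eq_update_of_disjoint {C : ι → AffineBasis ι ℝ E}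
    (hC : ∀ j, ⇑(C j) = update ⇑B j p)
    (hBC : ∀ j, Disjoint (interior (convexHull ℝ (range B)))
      (interior (convexHull ℝ (range (C j))))) : False := by
  have hneg : ∑ j, B.coord j p < 0 :=
    Finset.sum_neg (fun j _ => coord_neg_of_eq_update_of_disjoint (hC j) (hBC j))
      Finset.univ_nonempty
  linarith [B.sum_coord_apply_eq_one p]

end AffineBasis

local notation "ℝ²" => EuclideanSpace ℝ (Fin 2)

theorem Function.Injective.update_of_notMem_range {ι α : Type*} [DecidableEq ι] {f : ι → α}
    (hf : Injective f) {i : ι} {p : α} (hp : p ∉ range f) : Injective (update f i p) := by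
  intro a b hab
  by_cases ha : a = i <;> by_cases hb : b = i
  · rw [ha, hb]
  · subst ha; rw [update_self, update_of_ne hb] at hab; exact absurd ⟨b, hab.symm⟩ hp
  · subst hb; rw [update_self, update_of_ne ha] at hab; exact absurd ⟨a, hab⟩ hp
  · rw [update_of_ne ha, update_of_ne hb] at hab; exact hf hab

theorem Finset.eq_of_sdiff_eq_singleton_of_card_inter {α : Type*} [DecidableEq α]
    {s t u : Finset α} {a b p q : α} (hs : s.card = 3) (hab : a ≠ b) (ha : a ∈ s)
    (hb : b ∈ s) (hat : a ∉ t) (hbu : b ∉ u) (htu : (t ∩ u).card = 2) (hp : t \ s = {p})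
    (hq : u \ s = {q}) : p = q := by
  by_contra hpq
  have hsub : t ∩ u ⊆ (s.erase a).erase b := by
    intro x hx
    rw [Finset.mem_inter] at hx
    by_cases hxs : x ∈ s
    · refine Finset.mem_erase.2 ⟨?_, Finset.mem_erase.2 ⟨?_, hxs⟩⟩
      · rintro rfl; exact hbu hx.2
      · rintro rfl; exact hat hx.1
    · have hxp : x ∈ t \ s := Finset.mem_sdiff.2 ⟨hx.1, hxs⟩
      have hxq : x ∈ u \ s := Finset.mem_sdiff.2 ⟨hx.2, hxs⟩
      rw [hp, Finset.mem_singleton] at hxp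
      rw [hq, Finset.mem_singleton] at hxq
      exact absurd (hxp.symm.trans hxq) hpq
  have := Finset.card_le_card hsub
  rw [htu, Finset.card_erase_of_mem (Finset.mem_erase.2 ⟨hab.symm, hb⟩),
    Finset.card_erase_of_mem ha, hs] at this
  omega

theorem IsTriangle.exists_affineBasis {V : Finset ℝ²} (hV : IsTriangle V) {f : Fin 3 → ℝ²}
    (hf : Injective f) (hfV : range f ⊆ ↑V) : ∃ B : AffineBasis (Fin 3) ℝ ℝ², ⇑B = f :=
  have hind := AffineIndependent.of_set_of_injective (hV.2.mono hfV) hf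
  ⟨⟨f, hind, hind.affineSpan_eq_top_iff_card_eq_finrank_add_one.mpr (by simp)⟩, rfl⟩

theorem IsTriangle.exists_affineBasis_range_eq {V : Finset ℝ²} (hV : IsTriangle V) :
    ∃ B : AffineBasis (Fin 3) ℝ ℝ², range B = ↑V := by
  obtain ⟨x, y, z, hxy, hxz, hyz, rfl⟩ := Finset.card_eq_three.mp hV.1
  have hrange : range ![x, y, z] = ↑({x, y, z} : Finset ℝ²) := by
    ext w
    simp only [Matrix.range_cons, Matrix.range_empty, Finset.coe_insert, Finset.coe_singleton]
    simp only [union_empty, singleton_union, mem_insert_iff, mem_singleton_iff]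
  have hinj : Injective ![x, y, z] := by
    intro a b; fin_cases a <;> fin_cases b <;> simp [*, eq_comm]
  obtain ⟨B, hB⟩ := hV.exists_affineBasis hinj hrange.subset
  exact ⟨B, hB ▸ hrange⟩

theorem exists_eq_update_of_card_inter_eq_two (B : AffineBasis (Fin 3) ℝ ℝ²) {s t : Finset ℝ²}
    (hs : range B = ↑s) (ht : IsTriangle t) (hst : (s ∩ t).card = 2) :
    ∃ (i : Fin 3) (p : ℝ²) (C : AffineBasis (Fin 3) ℝ ℝ²),
      ⇑C = update ⇑B i p ∧ range C ⊆ ↑t ∧ B i ∉ t ∧ t \ s = {p} := by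
  have hs3 : s.card = 3 := by
    rw [← ncard_coe_finset, ← hs, ncard_range_of_injective B.ind.injective,
      Nat.card_eq_fintype_card, Fintype.card_fin]
  obtain ⟨p, hp⟩ : ∃ p, t \ s = {p} := Finset.card_eq_one.mp (by
    rw [Finset.card_sdiff, ht.1, hst])
  obtain ⟨x, hx⟩ : ∃ x, s \ t = {x} := Finset.card_eq_one.mp (by
    rw [Finset.card_sdiff, Finset.inter_comm, hst, hs3])
  have hxst : x ∈ s \ t := hx ▸ Finset.mem_singleton_self x
  obtain ⟨i, rfl⟩ : x ∈ range B := hs ▸ (Finset.mem_sdiff.1 hxst).1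
  have hpt : p ∈ t \ s := hp ▸ Finset.mem_singleton_self p
  have hBt : ∀ j ≠ i, B j ∈ t := fun j hj => by
    by_contra hjt
    have : B j ∈ s \ t := Finset.mem_sdiff.2 ⟨Finset.mem_coe.1 (hs ▸ mem_range_self j), hjt⟩
    rw [hx, Finset.mem_singleton] at this
    exact hj (B.ind.injective this)
  have hsub : range (update B i p) ⊆ ↑t := by
    rintro _ ⟨j, rfl⟩
    rcases eq_or_ne j i with rfl | hj
    · simpa using (Finset.mem_sdiff.1 hpt).1
    · simpa [update_of_ne hj] using hBt j hj
  have hinj : Injective (update B i p) :=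
    B.ind.injective.update_of_notMem_range (hs ▸ (Finset.mem_sdiff.1 hpt).2)
  obtain ⟨C, hC⟩ := ht.exists_affineBasis hinj hsub
  exact ⟨i, p, C, hC, hC ▸ hsub, (Finset.mem_sdiff.1 hxst).2, hp⟩

/-- There are no four nondegenerate triangles in the plane with pairwise disjoint
interiors such that every pair of them shares a common edge: the dual graph of a pure
2-dimensional simplicial complex in `ℝ²` contains no `K₄`. -/
theorem no_K4 :
    ¬ ∃ V : Fin 4 → Finset (EuclideanSpace ℝ (Fin 2)),
      (∀ i, IsTriangle (V i)) ∧
      (∀ i j, i ≠ j →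
        Disjoint (interior (convexHull ℝ (V i : Set (EuclideanSpace ℝ (Fin 2)))))
          (interior (convexHull ℝ (V j : Set (EuclideanSpace ℝ (Fin 2)))))) ∧
      (∀ i j, i ≠ j → SharesEdge (V i) (V j)) := by
  rintro ⟨V, hT, hD, hS⟩
  obtain ⟨B, hB⟩ := (hT 0).exists_affineBasis_range_eq
  have hBV : ∀ j, B j ∈ V 0 := fun j => Finset.mem_coe.1 (hB ▸ mem_range_self j)
  choose i p C hC hCV hBi hp using fun k : Fin 3 => exists_eq_update_of_card_inter_eq_two B hB
    (hT k.succ) (hS 0 k.succ (Fin.succ_ne_zero k).symm).1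
  have hCint : ∀ k, interior (convexHull ℝ (range (C k))) ⊆ interior (convexHull ℝ ↑(V k.succ)) :=
    fun k => interior_mono (convexHull_mono (hCV k))
  have hBC : ∀ k, Disjoint (interior (convexHull ℝ (range B)))
      (interior (convexHull ℝ (range (C k)))) := fun k =>
    hB ▸ (hD 0 k.succ (Fin.succ_ne_zero k).symm).mono_right (hCint k)
  by_cases hi : Injective i
  · have hp0 : ∀ k, p k = p 0 := fun k => by
      rcases eq_or_ne k 0 with rfl | hk
      · rfl
      exact Finset.eq_of_sdiff_eq_singleton_of_card_inter (hT 0).1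
        (fun h => hk (hi (B.ind.injective h))) (hBV _) (hBV _) (hBi k) (hBi 0)
        (hS k.succ (Fin.succ 0) ((Fin.succ_injective _).ne hk)).1 (hp k) (hp 0)
    choose k hk using Finite.injective_iff_surjective.mp hi
    exact AffineBasis.false_of_forall_eq_update_of_disjoint (C := fun j => C (k j)) (p := p 0)
      (fun j => by rw [hC, hk, hp0]) (fun j => hBC (k j))
  · obtain ⟨k, l, hkl, hne⟩ : ∃ k l, i k = i l ∧ k ≠ l := by simpa [Injective] using hi
    exact AffineBasis.false_of_eq_update_of_disjoint (hC k) (hkl ▸ hC l) (hBC k) (hBC l)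
      ((hD k.succ l.succ ((Fin.succ_injective _).ne hne)).mono (hCint k) (hCint l))
end

section
/- Every finite nonempty pure d-dimensional simplicial complex in ℝ^d (a finite collection of nondegenerate d-simplices with pairwise disjoint interiors, glued facet-to-facet) contains a simplex having at least one (d−1)-facet that is not shared with any other simplex of the collection. -/
open scoped Classical

/-!
Choose a point `x₀` in the interior of one simplex and a direction `u` generically, so that the
line `x₀ + ℝ u` misses the affine span of every face with fewer than `d` vertices (finitely many
affine subspaces of codimension at least two). The line leaves the compact union `U` of the
simplices at a frontier point `x`. Genericity forces `x` to have exactly one vanishing barycentric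
coordinate in a simplex `V` containing it, so `x` lies in the relative interior of a facet `F` of
`V`. If another simplex `W` contained `F`, then near `x` either `V` and `W` lie on opposite sides
of `F` and together cover a neighbourhood of `x`, contradicting `x ∈ frontier U`, or they lie on
the same side and their interiors meet.
-/

open Set Filter Topology Module

section Affine

variable {k V P : Type*} [Field k] [AddCommGroup V] [Module k V] [AddTorsor V P]

theorem finrank_vectorSpan_finset_le (G : Finset P) :
    finrank k (vectorSpan k (G : Set P)) ≤ G.card - 1 := by
  rcases G.eq_empty_or_nonempty with rfl | hG
  · rw [Finset.coe_empty, vectorSpan_empty, finrank_bot]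
    exact Nat.zero_le _
  · have h := finrank_vectorSpan_image_finset_le k id G (Nat.succ_pred_eq_of_pos hG.card_pos).symm
    rwa [Finset.image_id] at h

theorem affineSpan_ne_top_of_card_lt {G : Finset P} (hG : G.card < finrank k V) :
    affineSpan k (G : Set P) ≠ ⊤ := by
  intro htop
  have h := finrank_vectorSpan_finset_le (k := k) G
  rw [← direction_affineSpan, htop, AffineSubspace.direction_top, finrank_top] at h
  omega

theorem AffineBasis.coord_eq_mul_coord {ι κ : Type*} (b : AffineBasis ι k P) (c : AffineBasis κ k P)
    {i₀ : ι} {j₀ : κ} (h : c '' {j₀}ᶜ ⊆ b '' {i₀}ᶜ) (y : P) :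
    b.coord i₀ y = b.coord i₀ (c j₀) * c.coord j₀ y := by
  have hmap : b.coord i₀ = b.coord i₀ (c j₀) • c.coord j₀ := by
    refine AffineMap.ext_on c.tot ?_
    rintro _ ⟨j, rfl⟩
    by_cases hj : j = j₀
    · simp [hj]
    · obtain ⟨i, hi, hij⟩ := h ⟨j, hj, rfl⟩
      simp only [AffineMap.coe_smul, Pi.smul_apply, smul_eq_mul]
      rw [c.coord_apply_ne (Ne.symm hj), mul_zero, ← hij, b.coord_apply_ne (Ne.symm hi)]
  simpa using congr($hmap y)

theorem AffineBasis.coord_apply_ne_zero_of_image_compl_subset {ι κ : Type*}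
    (b : AffineBasis ι k P) (c : AffineBasis κ k P) {i₀ : ι} {j₀ : κ}
    (h : c '' {j₀}ᶜ ⊆ b '' {i₀}ᶜ) : b.coord i₀ (c j₀) ≠ 0 := by
  intro hβ
  simpa [hβ] using b.coord_eq_mul_coord c h (b i₀)

end Affine

section Barycentric

variable {𝕜 E ι : Type*} [Field 𝕜] [LinearOrder 𝕜] [IsStrictOrderedRing 𝕜] [AddCommGroup E]
  [Module 𝕜 E] [Fintype ι] (b : AffineBasis ι 𝕜 E)

theorem AffineBasis.mem_convexHull_image_coord_ne_zero {y : E}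
    (hy : y ∈ convexHull 𝕜 (range b)) : y ∈ convexHull 𝕜 (b '' {i | b.coord i y ≠ 0}) := by
  rw [b.convexHull_eq_nonneg_coord] at hy
  have hsum := b.sum_coord_apply_eq_one y
  have h := (Finset.univ.filter fun i => b.coord i y ≠ 0).centerMass_mem_convexHull
    (fun i _ => hy i) (by rw [Finset.sum_filter_ne_zero, hsum]; exact one_pos)
    (z := b) (fun i hi => mem_image_of_mem b (Finset.mem_filter.1 hi).2)
  rwa [Finset.centerMass_filter_ne_zero, Finset.centerMass_eq_of_sum_1 _ _ hsum,
    b.linear_combination_coord_eq_self] at h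

theorem AffineBasis.coord_pos_of_coord_eq_zero {y : E} (hy : y ∈ convexHull 𝕜 (range b))
    (hfew : ∀ s : Finset ι, s.card < finrank 𝕜 E → y ∉ affineSpan 𝕜 (b '' s))
    {i₀ i : ι} (h₀ : b.coord i₀ y = 0) (hi : i ≠ i₀) : 0 < b.coord i y := by
  refine ((b.convexHull_eq_nonneg_coord ▸ hy : y ∈ {x | ∀ i, 0 ≤ b.coord i x}) i).lt_of_ne' ?_
  intro hzero
  set s := Finset.univ.filter fun j => b.coord j y ≠ 0
  have hys : y ∈ affineSpan 𝕜 (b '' s) := by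
    refine convexHull_subset_affineSpan _ ?_
    simpa [s] using b.mem_convexHull_image_coord_ne_zero hy
  have hsub : s ⊆ (Finset.univ.erase i).erase i₀ := by
    intro j hj
    simp only [s, Finset.mem_filter] at hj
    simp only [Finset.mem_erase, Finset.mem_univ, and_true]
    exact ⟨fun h => hj.2 (h ▸ h₀), fun h => hj.2 (h ▸ hzero)⟩
  have hcard := Finset.card_le_card hsub
  rw [Finset.card_erase_of_mem (by simpa using hi.symm), Finset.card_erase_of_mem (by simp),
    Finset.card_univ] at hcard
  have htwo : 1 < Fintype.card ι := Fintype.one_lt_card_iff.2 ⟨i, i₀, hi⟩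
  have hdim := b.card_eq_finrank_add_one
  exact hfew s (by omega) hys

end Barycentric

section Topology

variable {E : Type*} [NormedAddCommGroup E] [NormedSpace ℝ E]

theorem IsOpen.exists_notMem_of_countable_affineSubspace [FiniteDimensional ℝ E] {O : Set E}
    (hO : IsOpen O) (hne : O.Nonempty) {𝒜 : Set (AffineSubspace ℝ E)} (h𝒜 : 𝒜.Countable)
    (htop : ⊤ ∉ 𝒜) : ∃ x ∈ O, ∀ A ∈ 𝒜, x ∉ A := by
  have := FiniteDimensional.complete ℝ E
  have hdense : Dense (⋂ A ∈ 𝒜, (A : Set E)ᶜ) := by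
    refine dense_biInter_of_isOpen (fun A _ => A.closed_of_finiteDimensional.isOpen_compl) h𝒜
      fun A hA => interior_eq_empty_iff_dense_compl.1 ?_
    by_contra h
    have hspan := isOpen_interior.affineSpan_eq_top (nonempty_iff_ne_empty.2 h)
    have hle : affineSpan ℝ (interior (A : Set E)) ≤ A := affineSpan_le.2 interior_subset
    exact htop (top_unique (hspan ▸ hle) ▸ hA)
  obtain ⟨x, hxO, hx⟩ := hdense.inter_open_nonempty O hO hne
  exact ⟨x, hxO, by simpa using hx⟩

theorem IsOpen.exists_line_avoiding_affineSpan [FiniteDimensional ℝ E] [Nontrivial E] {O : Set E}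
    (hO : IsOpen O) (hne : O.Nonempty) {𝒢 : Set (Finset E)} (h𝒢 : 𝒢.Countable)
    (hcard : ∀ G ∈ 𝒢, G.card < finrank ℝ E) :
    ∃ x ∈ O, ∃ u ≠ 0, ∀ G ∈ 𝒢, ∀ t : ℝ, x + t • u ∉ affineSpan ℝ (G : Set E) := by
  obtain ⟨x, hxO, hx⟩ := hO.exists_notMem_of_countable_affineSubspace hne (h𝒢.image _)
    (by rintro ⟨G, hG, h⟩; exact affineSpan_ne_top_of_card_lt (hcard G hG) h)
  have hcard' : ∀ G ∈ insert ∅ 𝒢, (insert x G).card - 1 < finrank ℝ E := by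
    rintro G (rfl | hG)
    · simpa using finrank_pos
    · have := hcard G hG
      have := G.card_insert_le x
      omega
  -- `G = ∅` contributes `vectorSpan {x} = ⊥`, and avoiding it makes `u ≠ 0`.
  obtain ⟨u, -, hu⟩ := isOpen_univ.exists_notMem_of_countable_affineSubspace univ_nonempty
    ((h𝒢.insert ∅).image fun G => (vectorSpan ℝ ((insert x G : Finset E) : Set E)).toAffineSubspace)
    (by
      rintro ⟨G, hG, h⟩
      have h' := congrArg AffineSubspace.direction h
      rw [Submodule.toAffineSubspace_direction, AffineSubspace.direction_top] at h'
      have := finrank_vectorSpan_finset_le (k := ℝ) (insert x G)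
      rw [h', finrank_top] at this
      exact absurd (hcard' G hG) (by omega))
  have hu' : ∀ G ∈ insert ∅ 𝒢, u ∉ vectorSpan ℝ ((insert x G : Finset E) : Set E) :=
    fun G hG hmem => hu _ ⟨G, hG, rfl⟩ (Submodule.mem_toAffineSubspace.2 hmem)
  refine ⟨x, hxO, u, fun h0 => hu' ∅ (mem_insert _ _) (h0 ▸ Submodule.zero_mem _), ?_⟩
  intro G hG t ht
  have ht0 : t ≠ 0 := by
    rintro rfl
    exact hx _ ⟨G, hG, rfl⟩ (by simpa using ht)
  have hmem : t • u ∈ vectorSpan ℝ ((insert x G : Finset E) : Set E) := by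
    rw [← direction_affineSpan]
    have hsub : affineSpan ℝ (G : Set E) ≤ affineSpan ℝ ((insert x G : Finset E) : Set E) :=
      affineSpan_mono ℝ (by simp)
    simpa using AffineSubspace.vsub_mem_direction (hsub ht)
      (subset_affineSpan ℝ _ (by simp) : x ∈ affineSpan ℝ ((insert x G : Finset E) : Set E))
  exact hu' G (mem_insert_of_mem _ hG) ((Submodule.smul_mem_iff _ ht0).1 hmem)

theorem IsCompact.exists_add_smul_mem_frontier {U : Set E} (hU : IsCompact U) {x u : E}
    (hx : x ∈ U) (hu : u ≠ 0) : ∃ t : ℝ, x + t • u ∈ frontier U := by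
  set f : ℝ → E := fun t => x + t • u
  have hf : Topology.IsClosedEmbedding f :=
    (Homeomorph.addLeft x).isClosedEmbedding.comp (isClosedEmbedding_smul_left hu)
  have hne : f ⁻¹' U ≠ univ := fun h => noncompact_univ ℝ (h ▸ hf.isCompact_preimage hU)
  obtain ⟨t, ht⟩ := nonempty_frontier_iff.2 ⟨⟨0, by simpa [f] using hx⟩, hne⟩
  exact ⟨t, hf.continuous.frontier_preimage_subset U ht⟩

end Topology

section SharedFacet

variable {E ι κ : Type*} [NormedAddCommGroup E] [NormedSpace ℝ E] [Fintype ι] [Fintype κ]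

theorem AffineBasis.exists_coord_eq_zero_of_notMem_interior (b : AffineBasis ι ℝ E) {x : E}
    (hx : x ∈ convexHull ℝ (range b)) (hx' : x ∉ interior (convexHull ℝ (range b))) :
    ∃ i, b.coord i x = 0 := by
  rw [b.convexHull_eq_nonneg_coord] at hx
  rw [b.interior_convexHull] at hx'
  obtain ⟨i, hi⟩ : ∃ i, b.coord i x ≤ 0 := by simpa using hx'
  exact ⟨i, le_antisymm hi (hx i)⟩

theorem AffineBasis.mem_interior_union_or_interior_inter_nonempty (b : AffineBasis ι ℝ E)
    (c : AffineBasis κ ℝ E) {i₀ : ι} {j₀ : κ} (h : c '' {j₀}ᶜ ⊆ b '' {i₀}ᶜ) {x : E}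
    (hx : x ∈ convexHull ℝ (range b)) (hb : ∀ i ≠ i₀, 0 < b.coord i x)
    (hc : ∀ j ≠ j₀, 0 < c.coord j x) :
    x ∈ interior (convexHull ℝ (range b) ∪ convexHull ℝ (range c)) ∨
      (interior (convexHull ℝ (range b)) ∩ interior (convexHull ℝ (range c))).Nonempty := by
  have := b.finiteDimensional
  have hprop := b.coord_eq_mul_coord c h
  have hnear : ∀ᶠ y in 𝓝 x, (∀ i ≠ i₀, 0 < b.coord i y) ∧ ∀ j ≠ j₀, 0 < c.coord j y := by
    refine (eventually_all.2 fun i => ?_).and (eventually_all.2 fun j => ?_)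
    · by_cases hi : i = i₀
      · exact .of_forall fun _ h => absurd hi h
      · filter_upwards [(b.coord i).continuous_of_finiteDimensional.continuousAt.eventually
          (lt_mem_nhds (hb i hi))] with y hy _ using hy
    · by_cases hj : j = j₀
      · exact .of_forall fun _ h => absurd hj h
      · filter_upwards [(c.coord j).continuous_of_finiteDimensional.continuousAt.eventually
          (lt_mem_nhds (hc j hj))] with y hy _ using hy
  rcases (b.coord_apply_ne_zero_of_image_compl_subset c h).lt_or_gt with hβ | hβ
  · left
    refine mem_interior_iff_mem_nhds.2 (hnear.mono fun y ⟨hby, hcy⟩ => ?_)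
    rw [b.convexHull_eq_nonneg_coord, c.convexHull_eq_nonneg_coord]
    by_cases hy : 0 ≤ b.coord i₀ y
    · exact .inl fun i => if hi : i = i₀ then hi ▸ hy else (hby i hi).le
    · refine .inr fun j => if hj : j = j₀ then hj ▸ ?_ else (hcy j hj).le
      exact (pos_of_mul_neg_right (hprop y ▸ not_le.1 hy) hβ.le).le
  · right
    have hcl : x ∈ closure (interior (convexHull ℝ (range b))) := by
      rw [(convex_convexHull ℝ _).closure_interior_eq_closure_of_nonempty_interior
        ⟨_, b.centroid_mem_interior_convexHull⟩]
      exact subset_closure hx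
    obtain ⟨y, ⟨-, hcy⟩, hyb⟩ := (hnear.and_frequently (mem_closure_iff_frequently.1 hcl)).exists
    refine ⟨y, hyb, ?_⟩
    rw [b.interior_convexHull] at hyb
    rw [c.interior_convexHull]
    intro j
    by_cases hj : j = j₀
    · exact hj ▸ pos_of_mul_pos_right (hprop y ▸ hyb i₀) hβ.le
    · exact hcy j hj

end SharedFacet

namespace IsSimplex

variable {d : ℕ} {V W : Finset (EuclideanSpace ℝ (Fin d))}

local notation "𝔼" => EuclideanSpace ℝ (Fin d)

def affineBasis (hV : IsSimplex d V) : AffineBasis V ℝ 𝔼 :=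
  ⟨(↑), hV.2, by
    rw [hV.2.affineSpan_eq_top_iff_card_eq_finrank_add_one]
    simp [hV.1]⟩

@[simp]
theorem coe_affineBasis (hV : IsSimplex d V) : ⇑hV.affineBasis = (↑) :=
  rfl

theorem range_affineBasis (hV : IsSimplex d V) : range hV.affineBasis = V := by
  simp

theorem affineSpan_eq_top_s10 (hV : IsSimplex d V) : affineSpan ℝ (V : Set 𝔼) = ⊤ :=
  hV.range_affineBasis ▸ hV.affineBasis.tot

theorem eq_of_dim_zero {V W : Finset (EuclideanSpace ℝ (Fin 0))} (hV : IsSimplex 0 V)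
    (hW : IsSimplex 0 W) : V = W := by
  obtain ⟨a, rfl⟩ := Finset.card_eq_one.1 hV.1
  obtain ⟨b, rfl⟩ := Finset.card_eq_one.1 hW.1
  rw [Subsingleton.elim a b]

theorem exists_coord_eq_zero_of_notMem_interior (hV : IsSimplex d V) {x : 𝔼}
    (hx : x ∈ convexHull ℝ (V : Set 𝔼)) (hx' : x ∉ interior (convexHull ℝ (V : Set 𝔼))) :
    ∃ i, hV.affineBasis.coord i x = 0 :=
  hV.affineBasis.exists_coord_eq_zero_of_notMem_interior (by rwa [range_affineBasis])
    (by rwa [range_affineBasis])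

theorem coord_pos_of_coord_eq_zero (hV : IsSimplex d V) {x : 𝔼}
    (hx : x ∈ convexHull ℝ (V : Set 𝔼))
    (hgen : ∀ G ⊆ V, G.card < d → x ∉ affineSpan ℝ (G : Set 𝔼))
    {i₀ i : V} (h₀ : hV.affineBasis.coord i₀ x = 0) (hi : i ≠ i₀) :
    0 < hV.affineBasis.coord i x := by
  refine hV.affineBasis.coord_pos_of_coord_eq_zero (by rwa [range_affineBasis]) (fun s hs => ?_)
    h₀ hi
  have hG := hgen (s.map (Function.Embedding.subtype _))
    (fun y hy => by obtain ⟨z, -, rfl⟩ := Finset.mem_map.1 hy; exact z.2) (by simpa using hs)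
  simpa using hG

theorem erase_not_subset (hV : IsSimplex d V) (hW : IsSimplex d W)
    (hdisj : Disjoint (interior (convexHull ℝ (V : Set 𝔼))) (interior (convexHull ℝ (W : Set 𝔼))))
    {x : 𝔼} (hxV : x ∈ convexHull ℝ (V : Set 𝔼))
    (hx : x ∉ interior (convexHull ℝ (V : Set 𝔼) ∪ convexHull ℝ (W : Set 𝔼)))
    (hgenV : ∀ G ⊆ V, G.card < d → x ∉ affineSpan ℝ (G : Set 𝔼))
    (hgenW : ∀ G ⊆ W, G.card < d → x ∉ affineSpan ℝ (G : Set 𝔼))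
    {i₀ : V} (h₀ : hV.affineBasis.coord i₀ x = 0) : ¬ V.erase i₀ ⊆ W := by
  intro hFW
  set b := hV.affineBasis
  set c := hW.affineBasis
  obtain ⟨w, hwW, hwF⟩ : ∃ w ∈ W, w ∉ V.erase i₀ := Finset.exists_mem_notMem_of_card_lt_card (by
    rw [Finset.card_erase_of_mem i₀.2, hV.1, hW.1]; omega)
  have hWeq : insert w (V.erase i₀) = W := Finset.eq_of_subset_of_card_le
    (Finset.insert_subset hwW hFW) (by
      rw [Finset.card_insert_of_notMem hwF, Finset.card_erase_of_mem i₀.2, hV.1, hW.1]; omega)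
  have hshare : c '' {⟨w, hwW⟩}ᶜ ⊆ b '' {i₀}ᶜ := by
    rintro _ ⟨j, hj, rfl⟩
    obtain hjw | hjF := Finset.mem_insert.1 (by rw [hWeq]; exact j.2)
    · exact absurd (Subtype.ext hjw) hj
    · obtain ⟨hne, hjV⟩ := Finset.mem_erase.1 hjF
      exact ⟨⟨j, hjV⟩, fun h => hne (congrArg Subtype.val (mem_singleton_iff.1 h)), rfl⟩
  have hxW : x ∈ convexHull ℝ (W : Set 𝔼) := by
    refine convexHull_mono ?_ (b.mem_convexHull_image_coord_ne_zero (by rwa [range_affineBasis]))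
    rintro _ ⟨i, hi, rfl⟩
    exact hFW (Finset.mem_erase.2 ⟨fun h => hi (Subtype.ext h ▸ h₀), i.2⟩)
  have hc₀ : c.coord ⟨w, hwW⟩ x = 0 := by
    have h := b.coord_eq_mul_coord c hshare x
    rw [h₀, eq_comm, mul_eq_zero] at h
    exact h.resolve_left (b.coord_apply_ne_zero_of_image_compl_subset c hshare)
  rcases b.mem_interior_union_or_interior_inter_nonempty c hshare
      (by rwa [range_affineBasis]) (fun i hi => hV.coord_pos_of_coord_eq_zero hxV hgenV h₀ hi)
      (fun j hj => hW.coord_pos_of_coord_eq_zero hxW hgenW hc₀ hj) with h | ⟨y, hyV, hyW⟩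
  · rw [range_affineBasis, range_affineBasis] at h
    exact hx h
  · rw [range_affineBasis] at hyV hyW
    exact Set.disjoint_left.1 hdisj hyV hyW

end IsSimplex

theorem exists_generic_mem_frontier {d : ℕ} (hd : 0 < d)
    {S : Finset (Finset (EuclideanSpace ℝ (Fin d)))} {V₀ : Finset (EuclideanSpace ℝ (Fin d))}
    (hV₀ : V₀ ∈ S) (hsimp₀ : IsSimplex d V₀) :
    ∃ x ∈ frontier (⋃ V ∈ S, convexHull ℝ (V : Set (EuclideanSpace ℝ (Fin d)))),
      ∀ V ∈ S, ∀ G ⊆ V, G.card < d → x ∉ affineSpan ℝ (G : Set (EuclideanSpace ℝ (Fin d))) := by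
  have : Nontrivial (EuclideanSpace ℝ (Fin d)) :=
    Module.nontrivial_of_finrank_pos (R := ℝ) (by simpa)
  obtain ⟨x₀, hx₀, u, hu, hline⟩ := isOpen_interior.exists_line_avoiding_affineSpan
    (interior_convexHull_nonempty_iff_affineSpan_eq_top.2 hsimp₀.affineSpan_eq_top_s10)
    (𝒢 := {G | ∃ V ∈ S, G ⊆ V ∧ G.card < d})
    ((S.biUnion Finset.powerset).countable_toSet.mono fun G ⟨V, hV, hGV, _⟩ =>
      Finset.mem_biUnion.2 ⟨V, hV, Finset.mem_powerset.2 hGV⟩)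
    (fun G ⟨_, _, _, hG⟩ => by simpa using hG)
  have hU : IsCompact (⋃ V ∈ S, convexHull ℝ (V : Set (EuclideanSpace ℝ (Fin d)))) :=
    S.finite_toSet.isCompact_biUnion fun V _ => V.finite_toSet.isCompact_convexHull (𝕜 := ℝ)
  obtain ⟨t, ht⟩ := hU.exists_add_smul_mem_frontier
    (subset_iUnion₂_of_subset V₀ hV₀ subset_rfl (interior_subset hx₀)) hu
  exact ⟨_, ht, fun V hV G hGV hG => hline G ⟨V, hV, hGV, hG⟩ t⟩

theorem exposed_facet_exists_general (d : ℕ) (S : Finset (Finset (EuclideanSpace ℝ (Fin d))))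
    (hne : S.Nonempty)
    (hsimp : ∀ V ∈ S, IsSimplex d V)
    (hdisj : ∀ V ∈ S, ∀ W ∈ S, V ≠ W →
      Disjoint (interior (convexHull ℝ (V : Set (EuclideanSpace ℝ (Fin d)))))
        (interior (convexHull ℝ (W : Set (EuclideanSpace ℝ (Fin d)))))) :
    ∃ V ∈ S, ∃ F ⊆ V, F.card = d ∧ ∀ W ∈ S, W ≠ V → ¬ F ⊆ W := by
  obtain ⟨V₀, hV₀⟩ := hne
  rcases Nat.eq_zero_or_pos d with rfl | hd
  · exact ⟨V₀, hV₀, ∅, Finset.empty_subset _, rfl,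
      fun W hW hWV _ => hWV ((hsimp W hW).eq_of_dim_zero (hsimp V₀ hV₀))⟩
  obtain ⟨x, hx, hgen⟩ := exists_generic_mem_frontier hd hV₀ (hsimp V₀ hV₀)
  have hVU : ∀ V ∈ S, convexHull ℝ (V : Set (EuclideanSpace ℝ (Fin d))) ⊆
      ⋃ V ∈ S, convexHull ℝ (V : Set (EuclideanSpace ℝ (Fin d))) :=
    fun V hV => subset_iUnion₂_of_subset V hV subset_rfl
  have hU : IsClosed (⋃ V ∈ S, convexHull ℝ (V : Set (EuclideanSpace ℝ (Fin d)))) :=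
    S.finite_toSet.isClosed_biUnion fun V _ => V.finite_toSet.isClosed_convexHull (𝕜 := ℝ)
  obtain ⟨V, hV, hxV⟩ := mem_iUnion₂.1 (hU.frontier_subset hx)
  obtain ⟨i₀, h₀⟩ := (hsimp V hV).exists_coord_eq_zero_of_notMem_interior hxV
    fun h => hx.2 (interior_mono (hVU V hV) h)
  refine ⟨V, hV, V.erase i₀, Finset.erase_subset _ _, ?_, fun W hW hWV => ?_⟩
  · rw [Finset.card_erase_of_mem i₀.2, (hsimp V hV).1, Nat.add_sub_cancel]
  exact (hsimp V hV).erase_not_subset (hsimp W hW) (hdisj V hV W hW hWV.symm) hxV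
    (fun h => hx.2 (interior_mono (union_subset (hVU V hV) (hVU W hW)) h)) (hgen V hV) (hgen W hW)
    h₀

/-- Every finite nonempty pure `d`-dimensional simplicial complex in `ℝ^d` contains a
simplex with an exposed `(d-1)`-facet: a facet shared with no other simplex. -/
theorem exposed_facet_exists (d : ℕ) (S : Finset (Finset (EuclideanSpace ℝ (Fin d))))
    (hne : S.Nonempty)
    (hsimp : ∀ V ∈ S, IsSimplex d V)
    (hdisj : ∀ V ∈ S, ∀ W ∈ S, V ≠ W →
      Disjoint (interior (convexHull ℝ (V : Set (EuclideanSpace ℝ (Fin d)))))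
        (interior (convexHull ℝ (W : Set (EuclideanSpace ℝ (Fin d))))))
    (hface : ∀ V ∈ S, ∀ W ∈ S, V ≠ W →
      convexHull ℝ (V : Set (EuclideanSpace ℝ (Fin d))) ∩
          convexHull ℝ (W : Set (EuclideanSpace ℝ (Fin d))) =
        convexHull ℝ ((V ∩ W : Finset (EuclideanSpace ℝ (Fin d))) :
          Set (EuclideanSpace ℝ (Fin d)))) :
    ∃ V ∈ S, ∃ F ⊆ V, F.card = d ∧ ∀ W ∈ S, W ≠ V → ¬ F ⊆ W :=
  exposed_facet_exists_general d S hne hsimp hdisj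
end

section
/- Every finite collection of triangles in the plane with pairwise disjoint interiors, where any two triangles intersect in a common vertex, a common edge, or not at all, admits a 3-coloring: a function assigning each triangle one of 3 colors such that any two triangles sharing an edge receive different colors. -/
/-
Such a family always contains a triangle with at most two edge-neighbours; removing it,
colouring the rest and putting it back, greedy colouring succeeds with three colours.

To find that triangle, take a vertex `v` that is strictly highest in a generic direction and,
among the edges at `v`, the edge `vb` of extreme slope, so that all triangles at `v` lie on one
side of the line `vb`. Two triangles with a common edge `pq` whose third vertices lie on the
same side of `pq` have overlapping interiors; hence `vb` lies in a single triangle `T`. Of three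
triangles on a common edge two have their third vertices on the same side, so each of the other
two edges of `T` is shared with at most one other triangle.
-/

open scoped Classical

open Set Filter Topology

namespace AffineBasis

theorem coord_mul_apply_eq {ι k P V : Type*} [CommRing k] [AddCommGroup V] [Module k V]
    [AddTorsor V P] (B : AffineBasis ι k P) {φ : P →ᵃ[k] k} {i : ι}
    (h : ∀ j ≠ i, φ (B j) = 0) (x : P) : B.coord i x * φ (B i) = φ x := by
  have : φ (B i) • (B.coord i : P →ᵃ[k] k) = φ := by
    refine AffineMap.ext_on B.tot ?_
    rintro _ ⟨j, rfl⟩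
    obtain rfl | hji := eq_or_ne j i
    · simp
    · simp [h j hji, B.coord_apply_ne hji.symm]
  rw [← this]
  simp [mul_comm]

theorem apply_two_ne_zero {k P V : Type*} [Ring k] [AddCommGroup V] [Module k V]
    [AddTorsor V P] {B : AffineBasis (Fin 3) k P} {φ : P →ᵃ[k] k} (hφ : φ ≠ 0)
    (h₀ : φ (B 0) = 0) (h₁ : φ (B 1) = 0) : φ (B 2) ≠ 0 := by
  refine fun h₂ => hφ (AffineMap.ext_on B.tot ?_)
  rintro _ ⟨i, rfl⟩
  fin_cases i <;> simpa

section Normed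

variable {P : Type*} [NormedAddCommGroup P] [NormedSpace ℝ P]

theorem eventually_lineMap_mem_interior_convexHull_s11 {ι : Type*} [Finite ι] (B : AffineBasis ι ℝ P)
    {m x : P} (hm : ∀ i, 0 ≤ B.coord i m) (hx : ∀ i, B.coord i m = 0 → 0 < B.coord i x) :
    ∀ᶠ ε in 𝓝[>] (0 : ℝ), AffineMap.lineMap m x ε ∈ interior (convexHull ℝ (range B)) := by
  simp only [B.interior_convexHull, mem_ofPred_eq, eventually_all, AffineMap.apply_lineMap]
  intro i
  rcases (hm i).eq_or_lt with h0 | hpos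
  · filter_upwards [self_mem_nhdsWithin] with ε hε
    rw [← h0, AffineMap.lineMap_apply_ring]
    have := hx i h0.symm
    simp only [mem_Ioi] at hε
    simpa using mul_pos hε this
  · have hcont : Tendsto (AffineMap.lineMap (B.coord i m) (B.coord i x)) (𝓝 (0 : ℝ))
        (𝓝 (B.coord i m)) := by
      simpa using
        (AffineMap.lineMap_continuous (R := ℝ) (p := B.coord i m) (q := B.coord i x)).tendsto 0
    exact nhdsWithin_le_nhds (hcont.eventually (eventually_gt_nhds hpos))

/-- Points near the midpoint of the common edge, pushed slightly towards `B₁ 2`, lie in both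
interiors. -/
theorem not_disjoint_interior_convexHull {B₁ B₂ : AffineBasis (Fin 3) ℝ P}
    (h₀ : B₁ 0 = B₂ 0) (h₁ : B₁ 1 = B₂ 1) (h₂ : 0 < B₂.coord 2 (B₁ 2)) :
    ¬Disjoint (interior (convexHull ℝ (range B₁))) (interior (convexHull ℝ (range B₂))) := by
  set m := midpoint ℝ (B₁ 0) (B₁ 1)
  have hm : ∀ B : AffineBasis (Fin 3) ℝ P, B 0 = B₁ 0 → B 1 = B₁ 1 →
      ∀ i, B.coord i m = if i = 2 then 0 else 2⁻¹ := by
    intro B hB₀ hB₁ i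
    rw [AffineMap.map_midpoint, ← hB₀, ← hB₁, midpoint_eq_smul_add]
    fin_cases i <;> simp [B.coord_apply]
  have e₁ := B₁.eventually_lineMap_mem_interior_convexHull_s11 (x := B₁ 2)
    (fun i => by rw [hm B₁ rfl rfl]; split_ifs <;> norm_num)
    (fun i hi => by rw [hm B₁ rfl rfl] at hi; split_ifs at hi with h <;> simp_all)
  have e₂ := B₂.eventually_lineMap_mem_interior_convexHull_s11 (x := B₁ 2)
    (fun i => by rw [hm B₂ h₀.symm h₁.symm]; split_ifs <;> norm_num)
    (fun i hi => by rw [hm B₂ h₀.symm h₁.symm] at hi; split_ifs at hi with h <;> simp_all)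
  obtain ⟨ε, hε₁, hε₂⟩ := (e₁.and e₂).exists
  exact Set.not_disjoint_iff.mpr ⟨_, hε₁, hε₂⟩

theorem not_disjoint_interior_convexHull_of_mul_pos {B₁ B₂ : AffineBasis (Fin 3) ℝ P}
    (h₀ : B₁ 0 = B₂ 0) (h₁ : B₁ 1 = B₂ 1) {φ : P →ᵃ[ℝ] ℝ} (hφ₀ : φ (B₁ 0) = 0)
    (hφ₁ : φ (B₁ 1) = 0) (hpos : 0 < φ (B₁ 2) * φ (B₂ 2)) :
    ¬Disjoint (interior (convexHull ℝ (range B₁))) (interior (convexHull ℝ (range B₂))) := by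
  have hφ : ∀ j ≠ 2, φ (B₂ j) = 0 := by
    intro j hj; fin_cases j <;> simp_all
  have key := B₂.coord_mul_apply_eq hφ (B₁ 2)
  refine not_disjoint_interior_convexHull h₀ h₁ ?_
  rw [← key] at hpos
  nlinarith [sq_nonneg (φ (B₂ 2))]

end Normed

end AffineBasis

theorem mul_pos_or_mul_pos_or_mul_pos {α : Type*} [CommRing α] [LinearOrder α]
    [IsStrictOrderedRing α] {a b c : α} (ha : a ≠ 0) (hb : b ≠ 0) (hc : c ≠ 0) :
    0 < a * b ∨ 0 < a * c ∨ 0 < b * c := by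
  rcases ha.lt_or_gt with ha | ha <;> rcases hb.lt_or_gt with hb | hb <;>
    rcases hc.lt_or_gt with hc | hc <;> simp [mul_pos_of_neg_of_neg, *]

open Finset in
def dualGraph (α : Type*) [DecidableEq α] : SimpleGraph (Finset α) where
  Adj V W := V ≠ W ∧ #(V ∩ W) = 2
  symm := ⟨fun V W h => ⟨h.1.symm, inter_comm V W ▸ h.2⟩⟩
  loopless := ⟨fun _ h => h.1 rfl⟩

open Finset in
@[simp]
theorem dualGraph_adj {α : Type*} [DecidableEq α] {V W : Finset α} :
    (dualGraph α).Adj V W ↔ V ≠ W ∧ #(V ∩ W) = 2 :=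
  Iff.rfl

open Finset in
theorem SimpleGraph.exists_coloring_of_forall_exists_card_le {α : Type*} (G : SimpleGraph α)
    (k : ℕ) (S : Finset α) (h : ∀ S' ⊆ S, S'.Nonempty → ∃ T ∈ S', #{W ∈ S' | G.Adj T W} ≤ k) :
    ∃ c : α → Fin (k + 1), ∀ V ∈ S, ∀ W ∈ S, G.Adj V W → c V ≠ c W := by
  induction S using Finset.strongInduction with
  | H S ih =>
  obtain rfl | hne := S.eq_empty_or_nonempty
  · exact ⟨fun _ => 0, by simp⟩
  obtain ⟨T, hT, hdeg⟩ := h S subset_rfl hne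
  obtain ⟨c, hc⟩ := ih (S.erase T) (erase_ssubset hT) fun S' hS' =>
    h S' (hS'.trans (erase_subset T S))
  obtain ⟨i, -, hi⟩ := exists_mem_notMem_of_card_lt_card
    (s := image c {W ∈ S | G.Adj T W}) (t := univ)
    (by rw [card_univ, Fintype.card_fin]; exact card_image_le.trans_lt (by omega))
  have hfree : ∀ W ∈ S, G.Adj T W → c W ≠ i := fun W hW hTW hWi =>
    hi (mem_image.2 ⟨W, mem_filter.2 ⟨hW, hTW⟩, hWi⟩)
  refine ⟨Function.update c T i, fun V hV W hW hVW => ?_⟩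
  obtain rfl | hVT := eq_or_ne V T
  · rw [Function.update_self, Function.update_of_ne hVW.ne.symm]
    exact (hfree W hW hVW).symm
  obtain rfl | hWT := eq_or_ne W T
  · rw [Function.update_self, Function.update_of_ne hVT]
    exact hfree V hV hVW.symm
  rw [Function.update_of_ne hVT, Function.update_of_ne hWT]
  exact hc V (mem_erase.2 ⟨hVT, hV⟩) W (mem_erase.2 ⟨hWT, hW⟩) hVW

local notation "E" => EuclideanSpace ℝ (Fin 2)

theorem IsTriangle.exists_affineBasis_s11 {V : Finset E} (hV : IsTriangle V) {p q : E}
    (hp : p ∈ V) (hq : q ∈ V) (hpq : p ≠ q) :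
    ∃ B : AffineBasis (Fin 3) ℝ E, B 0 = p ∧ B 1 = q ∧ (V : Set E) = range B := by
  have hq' : q ∈ V.erase p := Finset.mem_erase.mpr ⟨hpq.symm, hq⟩
  obtain ⟨r, hr⟩ : ∃ r, (V.erase p).erase q = {r} :=
    Finset.card_eq_one.mp (by simp [Finset.card_erase_of_mem, hp, hq', hV.1])
  have hr' : r ∈ (V.erase p).erase q := hr ▸ Finset.mem_singleton_self r
  have hrq : r ≠ q := Finset.ne_of_mem_erase hr'
  have hrp : r ≠ p := Finset.ne_of_mem_erase (Finset.mem_of_mem_erase hr')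
  have hVeq : V = {p, q, r} := by
    rw [← Finset.insert_erase hp, ← Finset.insert_erase hq', hr]
  have hinj : Function.Injective ![p, q, r] := by
    intro i j h
    fin_cases i <;> fin_cases j <;> simp_all [hpq.symm, hrp.symm, hrq.symm]
  let f : Fin 3 ↪ V := ⟨fun i => ⟨![p, q, r] i, by fin_cases i <;> simp [hVeq]⟩,
    fun i j h => hinj (congrArg Subtype.val h)⟩
  have hind : AffineIndependent ℝ ![p, q, r] := hV.2.comp_embedding f
  refine ⟨⟨![p, q, r], hind, ?_⟩, rfl, rfl, ?_⟩
  · rw [hind.affineSpan_eq_top_iff_card_eq_finrank_add_one]; simp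
  · change (V : Set E) = range ![p, q, r]
    rw [hVeq, Matrix.range_cons, Matrix.range_cons, Matrix.range_cons_empty,
      Set.singleton_union, Set.singleton_union]
    push_cast; rfl

namespace PlaneTriangles

theorem exists_injOn_add_mul {P : Set E} (hP : P.Finite) :
    ∃ t : ℝ, P.InjOn fun x => x 0 + t * x 1 := by
  have hbad : ∀ x y : E, x ≠ y → {t : ℝ | x 0 + t * x 1 = y 0 + t * y 1}.Subsingleton := by
    intro x y hxy t₁ ht₁ t₂ ht₂
    simp only [mem_ofPred_eq] at ht₁ ht₂
    by_contra hne
    have h₁ : x 1 = y 1 := by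
      have : (t₁ - t₂) * (x 1 - y 1) = 0 := by linarith
      simpa [sub_eq_zero, hne] using this
    have h₀ : x 0 = y 0 := by rw [h₁] at ht₁; linarith
    exact hxy (by ext i; fin_cases i <;> assumption)
  have hfin :
      (⋃ x ∈ P, ⋃ y ∈ P, ⋃ (_ : x ≠ y), {t : ℝ | x 0 + t * x 1 = y 0 + t * y 1}).Finite :=
    hP.biUnion fun x _ => hP.biUnion fun y _ => finite_iUnion fun hxy => (hbad x y hxy).finite
  obtain ⟨t, ht⟩ := hfin.infinite_compl.nonempty
  refine ⟨t, fun x hx y hy h => ?_⟩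
  by_contra hxy
  exact ht (mem_biUnion hx (mem_biUnion hy (mem_iUnion_of_mem hxy h)))

theorem exists_supporting_line (t : ℝ) (v : E) {A : Finset E} (hA : A.Nonempty)
    (hlt : ∀ x ∈ A, x 0 + t * x 1 < v 0 + t * v 1) :
    ∃ b ∈ A, ∃ ψ : E →ᵃ[ℝ] ℝ, ψ ≠ 0 ∧ ψ v = 0 ∧ ψ b = 0 ∧ ∀ x ∈ A, ψ x ≤ 0 := by
  set depth : E → ℝ := fun x => v 0 + t * v 1 - (x 0 + t * x 1)
  have hdepth : ∀ x ∈ A, 0 < depth x := fun x hx => sub_pos.2 (hlt x hx)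
  -- `ψ` cuts out the line through `v` of maximal slope towards `A`; all of `A` lies below it.
  obtain ⟨b, hbA, hb⟩ := A.exists_max_image (fun x => (x 1 - v 1) / depth x) hA
  set s := (b 1 - v 1) / depth b
  let L : E →L[ℝ] ℝ :=
    EuclideanSpace.proj 1 + s • (EuclideanSpace.proj 0 + t • EuclideanSpace.proj 1)
  let ψ : E →ᵃ[ℝ] ℝ := (L : E →ₗ[ℝ] ℝ).toAffineMap - AffineMap.const ℝ E (L v)
  have hψ : ∀ x, ψ x = x 1 - v 1 - s * depth x := fun x => by
    change L x - L v = _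
    simp only [L, depth, add_apply, smul_apply, PiLp.proj_apply, smul_eq_mul]
    ring
  have hψA : ∀ x ∈ A, ψ x = depth x * ((x 1 - v 1) / depth x - s) := fun x hx => by
    rw [hψ, mul_sub (depth x), mul_div_cancel₀ _ (hdepth x hx).ne', mul_comm]
  refine ⟨b, hbA, ψ, fun hψ0 => ?_, by simp [hψ, depth], by simp [hψA b hbA, s],
    fun x hx => ?_⟩
  · have h₀ : ψ (v + EuclideanSpace.single 0 1) = 0 := by rw [hψ0]; rfl
    have h₁ : ψ (v + EuclideanSpace.single 1 1) = 0 := by rw [hψ0]; rfl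
    rw [hψ] at h₀ h₁
    have hs : s = 0 := by simpa [depth] using h₀
    simp [depth, hs] at h₁
  · rw [hψA x hx]
    exact mul_nonpos_of_nonneg_of_nonpos (hdepth x hx).le (sub_nonpos.2 (hb x hx))

variable {S : Finset (Finset E)}

theorem eq_of_mul_pos
    (hd : (S : Set (Finset E)).PairwiseDisjoint fun V => interior (convexHull ℝ (V : Set E)))
    {V W : Finset E} (hV : V ∈ S) (hW : W ∈ S) {B₁ B₂ : AffineBasis (Fin 3) ℝ E}
    (hB₁ : (V : Set E) = range B₁) (hB₂ : (W : Set E) = range B₂) (h₀ : B₁ 0 = B₂ 0)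
    (h₁ : B₁ 1 = B₂ 1) {φ : E →ᵃ[ℝ] ℝ} (hφ₀ : φ (B₁ 0) = 0) (hφ₁ : φ (B₁ 1) = 0)
    (hpos : 0 < φ (B₁ 2) * φ (B₂ 2)) : V = W := by
  by_contra hne
  have := hd hV hW hne
  simp only [Function.onFun, hB₁, hB₂] at this
  exact AffineBasis.not_disjoint_interior_convexHull_of_mul_pos h₀ h₁ hφ₀ hφ₁ hpos this

theorem eq_or_eq_or_eq_of_mem_of_mem (hS : ∀ V ∈ S, IsTriangle V)
    (hd : (S : Set (Finset E)).PairwiseDisjoint fun V => interior (convexHull ℝ (V : Set E)))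
    {V₁ V₂ V₃ : Finset E} (h₁ : V₁ ∈ S) (h₂ : V₂ ∈ S) (h₃ : V₃ ∈ S) {p q : E} (hpq : p ≠ q)
    (hp₁ : p ∈ V₁) (hq₁ : q ∈ V₁) (hp₂ : p ∈ V₂) (hq₂ : q ∈ V₂) (hp₃ : p ∈ V₃) (hq₃ : q ∈ V₃) :
    V₁ = V₂ ∨ V₁ = V₃ ∨ V₂ = V₃ := by
  obtain ⟨B₁, rfl, rfl, hB₁⟩ := (hS V₁ h₁).exists_affineBasis_s11 hp₁ hq₁ hpq
  obtain ⟨B₂, h₂₀, h₂₁, hB₂⟩ := (hS V₂ h₂).exists_affineBasis_s11 hp₂ hq₂ hpq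
  obtain ⟨B₃, h₃₀, h₃₁, hB₃⟩ := (hS V₃ h₃).exists_affineBasis_s11 hp₃ hq₃ hpq
  have hφ₀ : B₁.coord 2 (B₁ 0) = 0 := B₁.coord_apply_ne (by decide)
  have hφ₁ : B₁.coord 2 (B₁ 1) = 0 := B₁.coord_apply_ne (by decide)
  have hφ : (B₁.coord 2 : E →ᵃ[ℝ] ℝ) ≠ 0 := fun h => by simpa [h] using B₁.coord_apply_eq 2
  have hne : ∀ B : AffineBasis (Fin 3) ℝ E, B 0 = B₁ 0 → B 1 = B₁ 1 → B₁.coord 2 (B 2) ≠ 0 :=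
    fun B hB₀ hB₁ => AffineBasis.apply_two_ne_zero hφ (hB₀ ▸ hφ₀) (hB₁ ▸ hφ₁)
  rcases mul_pos_or_mul_pos_or_mul_pos (hne B₁ rfl rfl) (hne B₂ h₂₀ h₂₁) (hne B₃ h₃₀ h₃₁)
    with h | h | h
  · exact Or.inl (eq_of_mul_pos hd h₁ h₂ hB₁ hB₂ h₂₀.symm h₂₁.symm hφ₀ hφ₁ h)
  · exact Or.inr (Or.inl (eq_of_mul_pos hd h₁ h₃ hB₁ hB₃ h₃₀.symm h₃₁.symm hφ₀ hφ₁ h))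
  · refine Or.inr (Or.inr (eq_of_mul_pos hd h₂ h₃ hB₂ hB₃ (h₂₀.trans h₃₀.symm)
      (h₂₁.trans h₃₁.symm) (h₂₀ ▸ hφ₀) (h₂₁ ▸ hφ₁) h))

theorem eq_of_forall_apply_nonpos (hS : ∀ V ∈ S, IsTriangle V)
    (hd : (S : Set (Finset E)).PairwiseDisjoint fun V => interior (convexHull ℝ (V : Set E)))
    {v b : E} (hvb : v ≠ b) {ψ : E →ᵃ[ℝ] ℝ} (hψ : ψ ≠ 0) (hψv : ψ v = 0) (hψb : ψ b = 0)
    (hle : ∀ W ∈ S, v ∈ W → ∀ x ∈ W, ψ x ≤ 0) {V W : Finset E} (hV : V ∈ S) (hW : W ∈ S)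
    (hvV : v ∈ V) (hbV : b ∈ V) (hvW : v ∈ W) (hbW : b ∈ W) : V = W := by
  have hneg : ∀ U ∈ S, v ∈ U → ∀ B : AffineBasis (Fin 3) ℝ E, B 0 = v → B 1 = b →
      (U : Set E) = range B → ψ (B 2) < 0 := by
    intro U hU hvU B hB₀ hB₁ hB
    refine (hle U hU hvU _ ?_).lt_of_ne
      (AffineBasis.apply_two_ne_zero hψ (hB₀ ▸ hψv) (hB₁ ▸ hψb))
    rw [← Finset.mem_coe, hB]
    exact mem_range_self 2
  obtain ⟨B₁, hB₁₀, hB₁₁, hB₁⟩ := (hS V hV).exists_affineBasis_s11 hvV hbV hvb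
  obtain ⟨B₂, hB₂₀, hB₂₁, hB₂⟩ := (hS W hW).exists_affineBasis_s11 hvW hbW hvb
  exact eq_of_mul_pos hd hV hW hB₁ hB₂ (hB₁₀.trans hB₂₀.symm) (hB₁₁.trans hB₂₁.symm)
    (hB₁₀ ▸ hψv) (hB₁₁ ▸ hψb)
    (mul_pos_of_neg_of_neg (hneg V hV hvV B₁ hB₁₀ hB₁₁ hB₁) (hneg W hW hvW B₂ hB₂₀ hB₂₁ hB₂))

theorem exists_edge_mem_unique (hS : ∀ V ∈ S, IsTriangle V)
    (hd : (S : Set (Finset E)).PairwiseDisjoint fun V => interior (convexHull ℝ (V : Set E)))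
    (hne : S.Nonempty) :
    ∃ T ∈ S, ∃ v ∈ T, ∃ b ∈ T, v ≠ b ∧ ∀ W ∈ S, v ∈ W → b ∈ W → W = T := by
  set P := S.biUnion id
  have hPne : P.Nonempty := by
    obtain ⟨V₀, hV₀⟩ := hne
    obtain ⟨x, hx⟩ := Finset.card_pos.1 (by rw [(hS V₀ hV₀).1]; norm_num)
    exact ⟨x, Finset.mem_biUnion.2 ⟨V₀, hV₀, hx⟩⟩
  obtain ⟨t, ht⟩ := exists_injOn_add_mul P.finite_toSet
  obtain ⟨v, hvP, hvmax⟩ := P.exists_max_image (fun x => x 0 + t * x 1) hPne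
  obtain ⟨V₀, hV₀, hvV₀ : v ∈ V₀⟩ := Finset.mem_biUnion.1 hvP
  set A := {V ∈ S | v ∈ V}.biUnion (·.erase v)
  have hA : ∀ x, x ∈ A ↔ ∃ V ∈ S, v ∈ V ∧ x ≠ v ∧ x ∈ V := by simp [A, and_assoc]
  have hAne : A.Nonempty := by
    obtain ⟨x, hx⟩ := Finset.card_pos.1 (by
      rw [Finset.card_erase_of_mem hvV₀, (hS V₀ hV₀).1]; norm_num : 0 < (V₀.erase v).card)
    exact ⟨x, (hA x).2 ⟨V₀, hV₀, hvV₀, Finset.mem_erase.1 hx⟩⟩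
  have hlt : ∀ x ∈ A, x 0 + t * x 1 < v 0 + t * v 1 := by
    intro x hx
    obtain ⟨V, hV, -, hxv, hxV⟩ := (hA x).1 hx
    have hxP : x ∈ P := Finset.mem_biUnion.2 ⟨V, hV, hxV⟩
    exact (hvmax x hxP).lt_of_ne fun h => hxv (ht hxP hvP h)
  obtain ⟨b, hbA, ψ, hψ, hψv, hψb, hψle⟩ := exists_supporting_line t v hAne hlt
  obtain ⟨T, hT, hvT, hbv, hbT⟩ := (hA b).1 hbA
  refine ⟨T, hT, v, hvT, b, hbT, hbv.symm, fun W hW hvW hbW =>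
    eq_of_forall_apply_nonpos hS hd hbv.symm hψ hψv hψb ?_ hW hT hvW hbW hvT hbT⟩
  intro U hU hvU x hx
  obtain rfl | hxv := eq_or_ne x v
  · exact hψv.le
  · exact hψle x ((hA x).2 ⟨U, hU, hvU, hxv, hx⟩)

open Finset in
theorem card_filter_dualGraph_adj_le_two (hS : ∀ V ∈ S, IsTriangle V)
    (hd : (S : Set (Finset E)).PairwiseDisjoint fun V => interior (convexHull ℝ (V : Set E)))
    {T : Finset E} (hT : T ∈ S) {v b : E} (hv : v ∈ T) (hb : b ∈ T) (hvb : v ≠ b)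
    (huniq : ∀ W ∈ S, v ∈ W → b ∈ W → W = T) :
    #{W ∈ S | (dualGraph E).Adj T W} ≤ 2 := by
  have hvb' : {v, b} ∈ T.powersetCard 2 :=
    mem_powersetCard.2 ⟨insert_subset hv (singleton_subset_iff.2 hb), card_pair hvb⟩
  calc #{W ∈ S | (dualGraph E).Adj T W}
      ≤ #((T.powersetCard 2).erase {v, b}) := by
        refine card_le_card_of_injOn (T ∩ ·) (fun W hW => ?_) (fun W₁ hW₁ W₂ hW₂ h => ?_)
        · obtain ⟨hWS, hTW, hcard⟩ := mem_filter.1 hW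
          refine mem_erase.2 ⟨fun h => hTW (huniq W hWS ?_ ?_).symm,
            mem_powersetCard.2 ⟨inter_subset_left, hcard⟩⟩
          · exact (mem_inter.1 (h ▸ mem_insert_self v {b})).2
          · exact (mem_inter.1 (h ▸ mem_insert_of_mem (mem_singleton_self b))).2
        · obtain ⟨hW₁S, hTW₁, hcard⟩ := mem_filter.1 hW₁
          obtain ⟨hW₂S, hTW₂, -⟩ := mem_filter.1 hW₂
          obtain ⟨p, q, hpq, hTW₁pq⟩ := card_eq_two.1 hcard
          have hmem : ∀ x ∈ ({p, q} : Finset E), x ∈ T ∧ x ∈ W₁ ∧ x ∈ W₂ := by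
            intro x hx
            have h₁ : x ∈ T ∩ W₁ := hTW₁pq ▸ hx
            have h₂ : x ∈ T ∩ W₂ := (show T ∩ W₁ = T ∩ W₂ from h) ▸ h₁
            exact ⟨(mem_inter.1 h₁).1, (mem_inter.1 h₁).2, (mem_inter.1 h₂).2⟩
          obtain ⟨hpT, hpW₁, hpW₂⟩ := hmem p (mem_insert_self p {q})
          obtain ⟨hqT, hqW₁, hqW₂⟩ := hmem q (mem_insert_of_mem (mem_singleton_self q))
          rcases eq_or_eq_or_eq_of_mem_of_mem hS hd hT hW₁S hW₂S hpq hpT hqT hpW₁ hqW₁ hpW₂ hqW₂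
            with h | h | h
          exacts [absurd h hTW₁, absurd h hTW₂, h]
    _ = 2 := by rw [card_erase_of_mem hvb', card_powersetCard, (hS T hT).1]; rfl

end PlaneTriangles

theorem triangle_three_coloring_general (S : Finset (Finset (EuclideanSpace ℝ (Fin 2))))
    (hsimp : ∀ V ∈ S, IsTriangle V)
    (hdisj : ∀ V ∈ S, ∀ W ∈ S, V ≠ W →
      Disjoint (interior (convexHull ℝ (V : Set (EuclideanSpace ℝ (Fin 2)))))
        (interior (convexHull ℝ (W : Set (EuclideanSpace ℝ (Fin 2)))))) :
    ∃ c : Finset (EuclideanSpace ℝ (Fin 2)) → Fin 3,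
      ∀ V ∈ S, ∀ W ∈ S, V ≠ W → (V ∩ W).card = 2 → c V ≠ c W := by
  obtain ⟨c, hc⟩ := (dualGraph E).exists_coloring_of_forall_exists_card_le 2 S
    fun S' hS' hne => by
      have hsimp' : ∀ V ∈ S', IsTriangle V := fun V hV => hsimp V (hS' hV)
      have hdisj' : (S' : Set (Finset E)).PairwiseDisjoint
          fun V => interior (convexHull ℝ (V : Set E)) :=
        fun V hV W hW => hdisj V (hS' hV) W (hS' hW)
      obtain ⟨T, hT, v, hv, b, hb, hvb, huniq⟩ :=
        PlaneTriangles.exists_edge_mem_unique hsimp' hdisj' hne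
      exact ⟨T, hT,
        PlaneTriangles.card_filter_dualGraph_adj_le_two hsimp' hdisj' hT hv hb hvb huniq⟩
  exact ⟨c, fun V hV W hW hVW h₂ => hc V hV W hW (dualGraph_adj.2 ⟨hVW, h₂⟩)⟩

/-- Every finite collection of triangles in the plane with pairwise disjoint interiors,
any two of which intersect in a common vertex, a common edge, or not at all, admits a
3-coloring in which triangles sharing an edge receive different colors. -/
theorem triangle_three_coloring (S : Finset (Finset (EuclideanSpace ℝ (Fin 2))))
    (hsimp : ∀ V ∈ S, IsTriangle V)
    (hdisj : ∀ V ∈ S, ∀ W ∈ S, V ≠ W →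
      Disjoint (interior (convexHull ℝ (V : Set (EuclideanSpace ℝ (Fin 2)))))
        (interior (convexHull ℝ (W : Set (EuclideanSpace ℝ (Fin 2))))))
    (hface : ∀ V ∈ S, ∀ W ∈ S, V ≠ W →
      convexHull ℝ (V : Set (EuclideanSpace ℝ (Fin 2))) ∩
          convexHull ℝ (W : Set (EuclideanSpace ℝ (Fin 2))) =
        convexHull ℝ ((V ∩ W : Finset (EuclideanSpace ℝ (Fin 2))) :
          Set (EuclideanSpace ℝ (Fin 2)))) :
    ∃ c : Finset (EuclideanSpace ℝ (Fin 2)) → Fin 3,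
      ∀ V ∈ S, ∀ W ∈ S, V ≠ W → (V ∩ W).card = 2 → c V ≠ c W :=
  triangle_three_coloring_general S hsimp hdisj
end

section
/- Let σ be a d-simplex in ℝ^d with vertices v₁,…,v_{d+1}, and let F be the facet opposite v₁. If a d-simplex τ shares F with σ and has disjoint interior from σ, then the vertex of τ not on F lies in the open halfspace bounded by the affine span of F not containing v₁. -/
/-!
Write `w 0` in barycentric coordinates `a` with respect to `v`. The sign of `a 0` decides on which
side of the facet hyperplane `w 0` lies, and `a 0 ≠ 0` because `w` is affinely independent. If
`a 0 > 0`, a point obtained from the centroid of the shared facet by moving a little towards `w 0`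
has all barycentric coordinates positive with respect to both `v` and `w`, so it is a common
interior point of the two simplices.
-/

open Set Filter Topology AffineMap

theorem eventually_nhdsGT_zero_lineMap_pos {u v : ℝ} (hu : 0 ≤ u) (hv : u = 0 → 0 < v) :
    ∀ᶠ t in 𝓝[>] (0 : ℝ), 0 < lineMap u v t := by
  rcases hu.eq_or_lt with rfl | hu
  · filter_upwards [self_mem_nhdsWithin] with t ht
    simpa [lineMap_apply_ring'] using mul_pos (mem_Ioi.1 ht) (hv rfl)
  · have hcont : Continuous fun t : ℝ => lineMap u v t := by fun_prop
    exact ((hcont.tendsto' 0 u (by simp)).eventually (lt_mem_nhds hu)).filter_mono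
      nhdsWithin_le_nhds

namespace AffineBasis

variable {ι : Type*}

theorem coord_apply_centroid_eq_ite {k V P : Type*} [Field k] [CharZero k] [AddCommGroup V]
    [Module k V] [AddTorsor V P] (b : AffineBasis ι k P) {s : Finset ι} (hs : s.Nonempty)
    (i : ι) [Decidable (i ∈ s)] :
    b.coord i (s.centroid k b) = if i ∈ s then (s.card : k)⁻¹ else 0 := by
  split_ifs with hi
  · exact b.coord_apply_centroid hi
  · exact b.coord_apply_combination_of_notMem hi (s.sum_centroidWeights_eq_one_of_nonempty k hs)

variable {E : Type*} [NormedAddCommGroup E] [NormedSpace ℝ E]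

theorem eventually_lineMap_mem_interior_convexHull_s15 [Finite ι] (b : AffineBasis ι ℝ E) {c y : E}
    (hc : ∀ i, 0 ≤ b.coord i c) (hy : ∀ i, b.coord i c = 0 → 0 < b.coord i y) :
    ∀ᶠ t in 𝓝[>] (0 : ℝ), lineMap c y t ∈ interior (convexHull ℝ (range b)) := by
  simp only [b.interior_convexHull, mem_ofPred_eq, eventually_all]
  intro i
  simpa only [apply_lineMap] using eventually_nhdsGT_zero_lineMap_pos (hc i) (hy i)

theorem not_disjoint_interior_convexHull_of_coord_pos [Fintype ι] [Nontrivial ι]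
    (b b' : AffineBasis ι ℝ E) {j : ι} (hb : ∀ i, i ≠ j → b' i = b i)
    (hj : 0 < b.coord j (b' j)) :
    ¬Disjoint (interior (convexHull ℝ (range b))) (interior (convexHull ℝ (range b'))) := by
  classical
  set s : Finset ι := {j}ᶜ
  have hs : s.Nonempty := by
    obtain ⟨i, hi⟩ := exists_ne j
    exact ⟨i, by simpa [s] using hi⟩
  have hcentroid : s.centroid ℝ b' = s.centroid ℝ b :=
    s.affineCombination_congr (fun _ _ => rfl) fun i hi => hb i (by simpa [s] using hi)
  have hc : ∀ b₀ : AffineBasis ι ℝ E, ∀ i, 0 ≤ b₀.coord i (s.centroid ℝ b₀) := fun b₀ i => by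
    rw [b₀.coord_apply_centroid_eq_ite hs]
    split_ifs <;> positivity
  have hc0 : ∀ b₀ : AffineBasis ι ℝ E, ∀ i, b₀.coord i (s.centroid ℝ b₀) = 0 → i = j :=
    fun b₀ i => by
      rw [b₀.coord_apply_centroid_eq_ite hs]
      split_ifs with hi
      · simp [hs.card_pos.ne']
      · simpa [s] using hi
  have hv := b.eventually_lineMap_mem_interior_convexHull_s15 (y := b' j) (hc b) fun i hi => by
    rw [hc0 b i hi]
    exact hj
  have hw := b'.eventually_lineMap_mem_interior_convexHull_s15 (y := b' j) (hc b') fun i hi => by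
    rw [hc0 b' i hi, coord_apply_eq]
    exact one_pos
  rw [hcentroid] at hw
  obtain ⟨t, hvt, hwt⟩ := (hv.and hw).exists
  exact not_disjoint_iff.2 ⟨_, hvt, hwt⟩

end AffineBasis

/-- If a `d`-simplex `τ` shares with the simplex `σ` (vertices `v`) the facet opposite
`v 0` and has interior disjoint from `σ`, then the remaining vertex of `τ` lies strictly
on the opposite side from `v 0` of the hyperplane spanned by that facet. -/
theorem opposite_side_of_shared_facet (d : ℕ)
    (v w : Fin (d + 1) → EuclideanSpace ℝ (Fin d))
    (hv : AffineIndependent ℝ v) (hw : AffineIndependent ℝ w)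
    (hshare : ∀ i : Fin (d + 1), i ≠ 0 → w i = v i)
    (hdisj : Disjoint (interior (convexHull ℝ (Set.range v)))
      (interior (convexHull ℝ (Set.range w)))) :
    (affineSpan ℝ (v '' {i : Fin (d + 1) | i ≠ 0})).SOppSide (w 0) (v 0) := by
  have hcard : Fintype.card (Fin (d + 1)) = Module.finrank ℝ (EuclideanSpace ℝ (Fin d)) + 1 := by
    simp
  let bv : AffineBasis (Fin (d + 1)) ℝ _ :=
    ⟨v, hv, hv.affineSpan_eq_top_iff_card_eq_finrank_add_one.2 hcard⟩
  let bw : AffineBasis (Fin (d + 1)) ℝ _ :=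
    ⟨w, hw, hw.affineSpan_eq_top_iff_card_eq_finrank_add_one.2 hcard⟩
  have : NeZero d := ⟨by
    rintro rfl
    exact hdisj.ne_of_mem bv.centroid_mem_interior_convexHull
      bw.centroid_mem_interior_convexHull (Subsingleton.elim _ _)⟩
  let σ : Affine.Simplex ℝ _ d := ⟨v, hv⟩
  let τ : Affine.Simplex ℝ _ d := ⟨w, hw⟩
  have hσ : v '' {i | i ≠ 0} = range (σ.faceOpposite 0).points :=
    (σ.range_faceOpposite_points 0).symm
  have hτ : range (σ.faceOpposite 0).points = range (τ.faceOpposite 0).points := by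
    simp only [Affine.Simplex.range_faceOpposite_points]
    exact image_congr fun i hi => (hshare i hi).symm
  have hsum := bv.sum_coord_apply_eq_one (w 0)
  have hw0 : Finset.univ.affineCombination ℝ σ.points (bv.coord · (w 0)) = w 0 :=
    bv.affineCombination_coord_eq_self (w 0)
  have hcoord : bv.coord 0 (w 0) < 0 := by
    refine lt_of_le_of_ne (not_lt.1 fun hpos => ?_) fun h0 => ?_
    · exact bv.not_disjoint_interior_convexHull_of_coord_pos bw hshare hpos hdisj
    · have h := (σ.affineCombination_mem_affineSpan_faceOpposite_iff hsum).2 h0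
      rw [hw0, hτ] at h
      exact τ.points_notMem_affineSpan_faceOpposite 0 h
  have h := (σ.sOppSide_affineSpan_faceOpposite_point_right_iff hsum).2 hcoord
  rwa [← hσ, hw0] at h
end

section
/- If G is a graph with maximum degree at most Δ that does not contain the complete graph K_{Δ+1} as a subgraph, and Δ ≥ 3, then G is Δ-colorable (Brooks' theorem, clique-free case). -/
/-!
Lovász's proof. By the de Bruijn–Erdős compactness theorem it suffices to colour every finite
vertex set `s`, which we do by strong induction on `s`. If some vertex has fewer than `Δ`
neighbours in `s`, colour the rest and extend. If some `c` disconnects `s`, colour the two sides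
together with `c` and permute colours so that they agree at `c`. Otherwise `s` is `Δ`-regular and
2-connected, and since `G` has no `K_{Δ+1}`, some vertex `v` has non-adjacent neighbours `a, b`
with `s \ {a, b}` connected (found, if the first choice fails, by an end-block argument in
`s` minus a vertex). Give `a` and `b` the same colour and colour the rest greedily by decreasing
distance to `v` in `s \ {a, b}`: every vertex but `v` still has an uncoloured neighbour when its
turn comes, and `v` sees a repeated colour.
-/

namespace SimpleGraph

open Finset

variable {V α : Type*} {G : SimpleGraph V}

def IsProperOn (G : SimpleGraph V) (C : V → α) (s : Set V) : Prop :=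
  ∀ ⦃u⦄, u ∈ s → ∀ ⦃w⦄, w ∈ s → G.Adj u w → C u ≠ C w

lemma IsProperOn.exists_union [DecidableEq α] {A B : Set V} {c : V} {C₁ C₂ : V → α}
    (h₁ : G.IsProperOn C₁ A) (h₂ : G.IsProperOn C₂ B) (hAB : A ∩ B ⊆ {c})
    (hsep : ∀ u ∈ A \ B, ∀ w ∈ B \ A, ¬G.Adj u w) : ∃ C : V → α, G.IsProperOn C (A ∪ B) := by
  classical
  -- recolour `B` so that the two colourings agree at `c`
  let σ := Equiv.swap (C₂ c) (C₁ c)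
  have hcross : ∀ u ∈ A, ∀ w ∈ B, w ∉ A → G.Adj u w → C₁ u ≠ σ (C₂ w) := by
    intro u hu w hw hwA huw
    have huB : u ∈ B := by_contra fun huB => hsep u ⟨hu, huB⟩ w ⟨hw, hwA⟩ huw
    obtain rfl : u = c := hAB ⟨hu, huB⟩
    rw [← Equiv.swap_apply_left (C₂ u) (C₁ u)]
    exact σ.injective.ne (h₂ huB hw huw)
  refine ⟨fun u => if u ∈ A then C₁ u else σ (C₂ u), fun u hu w hw huw => ?_⟩
  by_cases huA : u ∈ A <;> by_cases hwA : w ∈ A <;> simp only [huA, hwA, if_true, if_false]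
  · exact h₁ huA hwA huw
  · exact hcross u huA w (hw.resolve_left hwA) hwA huw
  · exact (hcross w hwA u (hu.resolve_left huA) huA huw.symm).symm
  · exact σ.injective.ne (h₂ (hu.resolve_left huA) (hw.resolve_left hwA) huw)

section Extension

variable [DecidableEq V] [DecidableRel G.Adj] {n : ℕ} {s : Finset V} {v : V}

lemma IsProperOn.exists_insert {C : V → Fin n} (hC : G.IsProperOn C s)
    (h : #({w ∈ s | G.Adj v w}.image C) < n) :
    ∃ C' : V → Fin n, G.IsProperOn C' ↑(insert v s) ∧ ∀ u ≠ v, C' u = C u := by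
  obtain ⟨c, -, hc⟩ := exists_mem_notMem_of_card_lt_card
    (s := {w ∈ s | G.Adj v w}.image C) (t := univ) (by rwa [card_univ, Fintype.card_fin])
  refine ⟨Function.update C v c, ?_, fun u hu => Function.update_of_ne hu _ _⟩
  have hv : ∀ w ∈ s, G.Adj v w → Function.update C v c v ≠ Function.update C v c w := by
    intro w hw hvw
    rw [Function.update_self, Function.update_of_ne (G.ne_of_adj hvw).symm]
    exact fun h => hc (mem_image.2 ⟨w, mem_filter.2 ⟨hw, hvw⟩, h.symm⟩)
  intro u hu w hw huw
  rw [coe_insert, Set.mem_insert_iff, mem_coe] at hu hw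
  obtain rfl | huv := eq_or_ne u v
  · exact hv w (hw.resolve_left (G.ne_of_adj huw).symm) huw
  obtain rfl | hwv := eq_or_ne w v
  · exact (hv u (hu.resolve_left huv) huw.symm).symm
  rw [Function.update_of_ne huv, Function.update_of_ne hwv]
  exact hC (hu.resolve_left huv) (hw.resolve_left hwv) huw

/-- Greedy colouring of `T` by decreasing `d`: when `u` is coloured, its coloured neighbours in `T`
are among those with `d u ≤ d w`. -/
lemma IsProperOn.exists_extend {P T : Finset V} {C : V → Fin n} (hC : G.IsProperOn C P)
    (hPT : Disjoint P T) (d : V → ℕ)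
    (hT : ∀ u ∈ T, #({w ∈ P | G.Adj u w}.image C) + #{w ∈ T | G.Adj u w ∧ d u ≤ d w} < n) :
    ∃ C' : V → Fin n, G.IsProperOn C' ↑(P ∪ T) ∧ ∀ u ∈ P, C' u = C u := by
  induction T using Finset.strongInduction with
  | H T ih =>
  obtain rfl | hT₀ := T.eq_empty_or_nonempty
  · exact ⟨C, by simpa using hC, fun _ _ => rfl⟩
  obtain ⟨r, hr, hmin⟩ := T.exists_min_image d hT₀
  obtain ⟨C₁, hC₁, hC₁P⟩ := ih (T.erase r) (erase_ssubset hr)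
    (disjoint_of_subset_right (erase_subset r T) hPT) fun u hu =>
      (hT u (mem_of_mem_erase hu)).trans_le' (by
        gcongr
        exact erase_subset r T)
  have hcount : #({w ∈ P ∪ T.erase r | G.Adj r w}.image C₁) < n := by
    refine lt_of_le_of_lt ?_ (hT r hr)
    rw [filter_union, image_union]
    refine (card_union_le _ _).trans (add_le_add (le_of_eq ?_) ?_)
    · exact congrArg card (image_congr fun w hw => hC₁P w (mem_filter.1 hw).1)
    · refine card_image_le.trans (card_le_card fun w hw => ?_)
      obtain ⟨hw, hrw⟩ := mem_filter.1 hw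
      exact mem_filter.2 ⟨mem_of_mem_erase hw, hrw, hmin w (mem_of_mem_erase hw)⟩
  obtain ⟨C₂, hC₂, hC₂r⟩ := hC₁.exists_insert hcount
  refine ⟨C₂, ?_, fun u hu => (hC₂r u ?_).trans (hC₁P u hu)⟩
  · rwa [← insert_erase hr, union_insert]
  · rintro rfl
    exact Finset.disjoint_left.1 hPT hu hr

end Extension

def induceOn (G : SimpleGraph V) (s : Set V) : SimpleGraph V where
  Adj u w := u ∈ s ∧ w ∈ s ∧ G.Adj u w
  symm := ⟨fun _ _ h => ⟨h.2.1, h.1, h.2.2.symm⟩⟩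
  loopless := ⟨fun _ h => G.irrefl h.2.2⟩

@[simp]
lemma induceOn_adj {s : Set V} {u w : V} : (G.induceOn s).Adj u w ↔ u ∈ s ∧ w ∈ s ∧ G.Adj u w :=
  Iff.rfl

def PreconnectedOn (G : SimpleGraph V) (s : Set V) : Prop :=
  ∀ u ∈ s, ∀ w ∈ s, (G.induceOn s).Reachable u w

section Connectivity

variable {s t : Set V} {u w x y z b : V}

lemma induceOn_mono (h : s ⊆ t) : G.induceOn s ≤ G.induceOn t :=
  fun _ _ ⟨hu, hw, huw⟩ => ⟨h hu, h hw, huw⟩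

lemma reachable_induceOn_of_adj (hu : u ∈ s) (hw : w ∈ s) (h : G.Adj u w) :
    (G.induceOn s).Reachable u w :=
  Adj.reachable (induceOn_adj.2 ⟨hu, hw, h⟩)

lemma mem_of_reachable_induceOn (h : (G.induceOn s).Reachable u w) (hu : u ∈ s) : w ∈ s := by
  obtain ⟨p⟩ := h
  induction p with
  | nil => exact hu
  | cons h _ ih => exact ih (induceOn_adj.1 h).2.1

lemma exists_adj_of_reachable_induceOn (h : (G.induceOn s).Reachable u x) (hu : u ∈ s)
    (hux : u ≠ x) : ∃ z, G.Adj z x ∧ (G.induceOn (s \ {x})).Reachable u z := by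
  obtain ⟨p⟩ := h
  induction p with
  | nil => exact absurd rfl hux
  | @cons u w x h _ ih =>
    obtain ⟨-, hw, h⟩ := induceOn_adj.1 h
    by_cases hwx : w = x
    · exact ⟨u, hwx ▸ h, .rfl⟩
    · obtain ⟨z, hzx, hz⟩ := ih hw hwx
      exact ⟨z, hzx, (reachable_induceOn_of_adj (s := s \ {x}) ⟨hu, hux⟩ ⟨hw, hwx⟩ h).trans hz⟩

lemma reachable_induceOn_sdiff_singleton (h : (G.induceOn s).Reachable u w)
    (hb : ¬(G.induceOn s).Reachable u b) : (G.induceOn (s \ {b})).Reachable u w := by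
  obtain ⟨p⟩ := h
  induction p with
  | nil => rfl
  | @cons u x w h _ ih =>
    have hub : u ≠ b := by rintro rfl; exact hb .rfl
    have hxb : x ≠ b := by rintro rfl; exact hb h.reachable
    obtain ⟨hu, hx, hux⟩ := induceOn_adj.1 h
    exact (reachable_induceOn_of_adj (s := s \ {b}) ⟨hu, hub⟩ ⟨hx, hxb⟩ hux).trans
      (ih fun hx => hb (h.reachable.trans hx))

lemma PreconnectedOn.insert_of_adj (ht : G.PreconnectedOn t) (hz : z ∈ t) (hxz : G.Adj x z) :
    G.PreconnectedOn (insert x t) := by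
  have hx : ∀ u ∈ insert x t, (G.induceOn (insert x t)).Reachable x u := by
    rintro u (rfl | hu)
    · rfl
    · exact (reachable_induceOn_of_adj (.inl rfl) (.inr hz) hxz).trans
        ((ht z hz u hu).mono (induceOn_mono (Set.subset_insert _ _)))
  exact fun u hu w hw => (hx u hu).symm.trans (hx w hw)

lemma Reachable.exists_adj_dist_lt (h : G.Reachable x y) (hne : x ≠ y) :
    ∃ w, G.Adj x w ∧ G.dist w y < G.dist x y := by
  obtain ⟨p, hp⟩ := h.exists_walk_length_eq_dist
  cases p with
  | nil => exact absurd rfl hne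
  | cons hxw q =>
    rw [Walk.length_cons] at hp
    exact ⟨_, hxw, by have := dist_le q; omega⟩

end Connectivity

section Fragments

variable {H : Set V} {x y a b d e u : V}

lemma exists_component_subset_of_not_preconnectedOn (hH : G.PreconnectedOn H) (hx : x ∈ H)
    (he : e ∈ H \ {x}) (hu : (G.induceOn (H \ {x})).Reachable e u)
    (hcut : ¬G.PreconnectedOn (H \ {u})) :
    ∃ e' ∈ H \ {u}, ∀ r, (G.induceOn (H \ {u})).Reachable e' r →
      (G.induceOn (H \ {x})).Reachable e r ∧ r ≠ u := by
  have huH : u ∈ H \ {x} := mem_of_reachable_induceOn hu he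
  have hxu : x ∈ H \ {u} := ⟨hx, fun h => huH.2 h.symm⟩
  obtain ⟨e', he', hxe'⟩ : ∃ e' ∈ H \ {u}, ¬(G.induceOn (H \ {u})).Reachable x e' := by
    by_contra! h
    exact hcut fun p hp q hq => (h p hp).symm.trans (h q hq)
  refine ⟨e', he', fun r hr => ⟨?_, (mem_of_reachable_induceOn hr he').2⟩⟩
  by_contra hre
  have hrH : r ∈ H \ {u} := mem_of_reachable_induceOn hr he'
  have hrx : r ≠ x := by rintro rfl; exact hxe' hr.symm
  obtain ⟨z, hzx, hrz⟩ := exists_adj_of_reachable_induceOn (hH r hrH.1 x hx) hrH.1 hrx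
  have hrz' := reachable_induceOn_sdiff_singleton hrz fun h => hre (hu.trans h.symm)
  have hz : z ∈ (H \ {x}) \ {u} := mem_of_reachable_induceOn hrz' ⟨⟨hrH.1, hrx⟩, hrH.2⟩
  have hrx' : (G.induceOn (H \ {u})).Reachable r x :=
    (hrz'.mono (induceOn_mono (Set.sdiff_subset_sdiff_left Set.sdiff_subset))).trans
      (reachable_induceOn_of_adj ⟨hz.1.1, hz.2⟩ hxu hzx)
  exact hxe' (hr.trans hrx').symm

/-- A minimal component of some `H \ {x}` inside a component of `H \ {y}` (an end block) contains
no cut vertex of `H`. -/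
lemma exists_component_forall_preconnectedOn (hHf : H.Finite) (hH : G.PreconnectedOn H)
    (hy : y ∈ H) (hd : d ∈ H \ {y}) :
    ∃ x ∈ H, ∃ e ∈ H \ {x}, ∀ r, (G.induceOn (H \ {x})).Reachable e r →
      (G.induceOn (H \ {y})).Reachable d r ∧ G.PreconnectedOn (H \ {r}) := by
  let comp (x e : V) : Set V := {r | (G.induceOn (H \ {x})).Reachable e r}
  let 𝓕 : Set (Set V) := {E | ∃ x ∈ H, ∃ e ∈ H \ {x}, E = comp x e ∧ E ⊆ comp y d}
  have h𝓕 : 𝓕.Finite := hHf.finite_subsets.subset <| by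
    rintro _ ⟨x, -, e, he, rfl, -⟩ r hr
    exact (mem_of_reachable_induceOn hr he).1
  obtain ⟨E, ⟨x, hx, e, he, rfl, hsub⟩, hmin⟩ :=
    h𝓕.exists_minimal ⟨_, y, hy, d, hd, rfl, subset_rfl⟩
  refine ⟨x, hx, e, he, fun r hr => ⟨hsub hr, ?_⟩⟩
  by_contra hcut
  obtain ⟨e', he', hE'⟩ := exists_component_subset_of_not_preconnectedOn hH hx he hr hcut
  have hr' : r ∈ comp r e' :=
    hmin ⟨r, (mem_of_reachable_induceOn hr he).1, e', he', rfl, fun w hw => hsub (hE' w hw).1⟩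
      (fun w hw => (hE' w hw).1) hr
  exact (hE' r hr').2 rfl

lemma reachable_induceOn_sdiff_pair (ha : G.PreconnectedOn (H \ {a})) (hy : y ∈ H) (hya : y ≠ a)
    (hyb : y ≠ b) (hu : u ∈ H \ {a, b}) (hub : ¬(G.induceOn (H \ {y})).Reachable u b) :
    (G.induceOn (H \ {a, b})).Reachable u y := by
  obtain rfl | huy := eq_or_ne u y
  · rfl
  simp only [Set.mem_sdiff, Set.mem_insert_iff, Set.mem_singleton_iff, not_or] at hu
  obtain ⟨z, hzy, huz⟩ := exists_adj_of_reachable_induceOn (ha u ⟨hu.1, hu.2.1⟩ y ⟨hy, hya⟩)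
    ⟨hu.1, hu.2.1⟩ huy
  have huz' := reachable_induceOn_sdiff_singleton huz fun h =>
    hub (h.mono (induceOn_mono (Set.sdiff_subset_sdiff_left Set.sdiff_subset)))
  have hz := mem_of_reachable_induceOn huz' ⟨⟨⟨hu.1, hu.2.1⟩, huy⟩, hu.2.2⟩
  have hsub : ((H \ {a}) \ {y}) \ {b} ⊆ H \ {a, b} := fun r hr => by
    simp only [Set.mem_sdiff, Set.mem_insert_iff, Set.mem_singleton_iff, not_or] at hr ⊢
    tauto
  exact (huz'.mono (induceOn_mono hsub)).trans
    (reachable_induceOn_of_adj (hsub hz) (by simp [hy, hya, hyb]) hzy)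

lemma preconnectedOn_sdiff_pair (ha : G.PreconnectedOn (H \ {a}))
    (hb : G.PreconnectedOn (H \ {b})) (hy : y ∈ H) (hya : y ≠ a) (hyb : y ≠ b)
    (hab : ¬(G.induceOn (H \ {y})).Reachable a b) : G.PreconnectedOn (H \ {a, b}) := by
  have hreach : ∀ u ∈ H \ {a, b}, (G.induceOn (H \ {a, b})).Reachable u y := by
    intro u hu
    by_cases hub : (G.induceOn (H \ {y})).Reachable u b
    · rw [Set.pair_comm] at hu ⊢
      exact reachable_induceOn_sdiff_pair hb hy hyb hya hu fun hua => hab (hua.symm.trans hub)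
    · exact reachable_induceOn_sdiff_pair ha hy hya hyb hu hub
  exact fun u hu w hw => (hreach u hu).trans (hreach w hw).symm

end Fragments

lemma exists_isProperOn_of_not_preconnectedOn_sdiff [DecidableEq α] {s : Finset V} {c : V}
    (hcut : ¬G.PreconnectedOn (↑s \ {c}))
    (ih : ∀ t ⊂ s, ∃ C : V → α, G.IsProperOn C t) : ∃ C : V → α, G.IsProperOn C s := by
  classical
  obtain ⟨u, hu, w, hw, huw⟩ : ∃ u ∈ (↑s \ {c} : Set V), ∃ w ∈ (↑s \ {c} : Set V),
      ¬(G.induceOn (↑s \ {c})).Reachable u w := by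
    by_contra! h
    exact hcut h
  let R (x : V) : Prop := (G.induceOn (↑s \ {c})).Reachable u x
  obtain ⟨C₁, hC₁⟩ := ih {x ∈ s | x = c ∨ R x} (filter_ssubset.2 ⟨w, hw.1, not_or.2 ⟨hw.2, huw⟩⟩)
  obtain ⟨C₂, hC₂⟩ := ih {x ∈ s | x = c ∨ ¬R x}
    (filter_ssubset.2 ⟨u, hu.1, not_or.2 ⟨hu.2, not_not.2 .rfl⟩⟩)
  obtain ⟨C, hC⟩ := hC₁.exists_union hC₂ (c := c)
    (fun x ⟨hxA, hxB⟩ => by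
      rw [mem_coe, mem_filter] at hxA hxB
      exact Classical.byContradiction fun hxc => hxB.2.resolve_left hxc (hxA.2.resolve_left hxc))
    (fun x ⟨hxA, hxB⟩ y ⟨hyB, hyA⟩ hxy => by
      simp only [mem_coe, mem_filter, not_and, not_or] at hxA hxB hyA hyB
      have hxc : x ≠ c := (hxB hxA.1).1
      exact (hyA hyB.1).2 ((hxA.2.resolve_left hxc).trans
        (reachable_induceOn_of_adj ⟨hxA.1, hxc⟩ ⟨hyB.1, (hyA hyB.1).1⟩ hxy)))
  refine ⟨C, ?_⟩
  convert hC using 1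
  ext x
  simp only [Set.mem_union, mem_coe, mem_filter]
  tauto

section Brooks

variable [DecidableEq V] [DecidableRel G.Adj] {s : Finset V} {v x y a b : V} {n : ℕ}

lemma exists_adj_adj_not_adj (hG : G.CliqueFree (n + 1)) (hv : #{w ∈ s | G.Adj v w} = n) :
    ∃ a ∈ s, ∃ b ∈ s, G.Adj v a ∧ G.Adj v b ∧ a ≠ b ∧ ¬G.Adj a b := by
  by_contra! h
  refine hG (insert v {w ∈ s | G.Adj v w}) ⟨?_, ?_⟩
  · rw [coe_insert]
    refine IsClique.insert (fun a ha b hb hab => ?_) fun w hw _ => (mem_filter.1 hw).2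
    rw [mem_coe, mem_filter] at ha hb
    exact h a ha.1 b hb.1 ha.2 hb.2 hab
  · rw [card_insert_of_notMem (by simp), hv]

lemma exists_adj_adj_preconnectedOn_sdiff_pair_of_not_preconnectedOn
    (hs : ∀ c ∈ s, G.PreconnectedOn (↑s \ {c})) (hx : x ∈ s) (hdeg : 3 ≤ #{w ∈ s | G.Adj x w})
    (hy : y ∈ s) (hxy : x ≠ y) (hcut : ¬G.PreconnectedOn (↑s \ {x, y})) :
    ∃ a ∈ s, ∃ b ∈ s, G.Adj x a ∧ G.Adj x b ∧ a ≠ b ∧ ¬G.Adj a b ∧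
      G.PreconnectedOn (↑s \ {a, b}) := by
  set H : Set V := ↑s \ {x}
  have hyH : y ∈ H := ⟨hy, hxy.symm⟩
  have hHy : H \ {y} = ↑s \ {x, y} := by rw [Set.sdiff_sdiff, Set.singleton_union]
  obtain ⟨d₁, hd₁, d₂, hd₂, hd⟩ :
      ∃ d₁ ∈ H \ {y}, ∃ d₂ ∈ H \ {y}, ¬(G.induceOn (H \ {y})).Reachable d₁ d₂ := by
    by_contra! h
    exact hcut (hHy ▸ h)
  have hnbr : ∀ x' ∈ H, ∀ e ∈ H \ {x'}, ∃ a, G.Adj x a ∧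
      (G.induceOn (H \ {x'})).Reachable e a := by
    intro x' hx' e he
    obtain ⟨a, hax, hea⟩ := exists_adj_of_reachable_induceOn
      (hs x' hx'.1 e ⟨he.1.1, he.2⟩ x ⟨hx, fun h => hx'.2 h.symm⟩) ⟨he.1.1, he.2⟩ he.1.2
    exact ⟨a, hax.symm, by rwa [Set.sdiff_sdiff_comm] at hea⟩
  have hHf : H.Finite := s.finite_toSet.sdiff
  obtain ⟨x₁, hx₁, e₁, he₁, hE₁⟩ := exists_component_forall_preconnectedOn hHf (hs x hx) hyH hd₁
  obtain ⟨x₂, hx₂, e₂, he₂, hE₂⟩ := exists_component_forall_preconnectedOn hHf (hs x hx) hyH hd₂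
  obtain ⟨a, hxa, hea⟩ := hnbr x₁ hx₁ e₁ he₁
  obtain ⟨b, hxb, heb⟩ := hnbr x₂ hx₂ e₂ he₂
  obtain ⟨hda, ha⟩ := hE₁ a hea
  obtain ⟨hdb, hb⟩ := hE₂ b heb
  have hab : ¬(G.induceOn (H \ {y})).Reachable a b := fun h => hd ((hda.trans h).trans hdb.symm)
  have haH : a ∈ H \ {y} := mem_of_reachable_induceOn hda hd₁
  have hbH : b ∈ H \ {y} := mem_of_reachable_induceOn hdb hd₂
  have hHab : G.PreconnectedOn (H \ {a, b}) :=
    preconnectedOn_sdiff_pair ha hb hyH (fun h => haH.2 h.symm) (fun h => hbH.2 h.symm) hab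
  obtain ⟨z, hz, hzab⟩ : ∃ z ∈ {w ∈ s | G.Adj x w}, z ∉ ({a, b} : Finset V) :=
    exists_mem_notMem_of_card_lt_card ((card_le_two).trans_lt hdeg)
  rw [mem_filter] at hz
  refine ⟨a, haH.1.1, b, hbH.1.1, hxa, hxb, fun h => hab (h ▸ .rfl),
    fun h => hab (reachable_induceOn_of_adj haH hbH h), ?_⟩
  have hs_eq : (↑s \ {a, b} : Set V) = insert x (H \ {a, b}) := by
    ext r
    obtain rfl | hrx := eq_or_ne r x
    · simp [hx, hxa.ne, hxb.ne]
    · simp [H, hrx]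
  rw [hs_eq]
  exact hHab.insert_of_adj ⟨⟨hz.1, (G.ne_of_adj hz.2).symm⟩, by simpa using hzab⟩ hz.2

lemma exists_adj_adj_preconnectedOn_sdiff_pair (hs : ∀ c ∈ s, G.PreconnectedOn (↑s \ {c}))
    (hdeg : ∀ x ∈ s, 3 ≤ #{w ∈ s | G.Adj x w}) (hv : v ∈ s) (ha : a ∈ s) (hb : b ∈ s)
    (hva : G.Adj v a) (hvb : G.Adj v b) (hab : a ≠ b) (hnab : ¬G.Adj a b) :
    ∃ v ∈ s, ∃ a ∈ s, ∃ b ∈ s, G.Adj v a ∧ G.Adj v b ∧ a ≠ b ∧ ¬G.Adj a b ∧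
      G.PreconnectedOn (↑s \ {a, b}) := by
  by_cases h : G.PreconnectedOn (↑s \ {a, b})
  · exact ⟨v, hv, a, ha, b, hb, hva, hvb, hab, hnab, h⟩
  · exact ⟨a, ha, exists_adj_adj_preconnectedOn_sdiff_pair_of_not_preconnectedOn hs ha (hdeg a ha)
      hb hab h⟩

lemma exists_isProperOn_of_preconnectedOn_sdiff_pair (hdeg : ∀ u ∈ s, #{w ∈ s | G.Adj u w} ≤ n)
    (hv : v ∈ s) (ha : a ∈ s) (hb : b ∈ s) (hva : G.Adj v a) (hvb : G.Adj v b) (hab : a ≠ b)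
    (hnab : ¬G.Adj a b) (hconn : G.PreconnectedOn (↑s \ {a, b})) :
    ∃ C : V → Fin n, G.IsProperOn C s := by
  set P : Finset V := {a, b}
  set T : Finset V := s \ P
  have hPs : P ⊆ s := by simp [P, insert_subset_iff, ha, hb]
  have hsplit (u : V) : #{w ∈ P | G.Adj u w} + #{w ∈ T | G.Adj u w} = #{w ∈ s | G.Adj u w} := by
    rw [← card_union_of_disjoint (disjoint_filter_filter disjoint_sdiff), ← filter_union,
      union_sdiff_of_subset hPs]
  have hPv : #{w ∈ P | G.Adj v w} = 2 := by
    rw [filter_true_of_mem (by simp [P, hva, hvb])]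
    exact card_pair hab
  have hn : 2 ≤ n := by have := hsplit v; have := hdeg v hv; omega
  -- `a` and `b` get the same colour, so `v` is coloured last with a colour to spare
  let C : V → Fin n := fun _ => ⟨0, by omega⟩
  have hC : G.IsProperOn C P := by
    intro u hu w hw huw
    simp only [P, coe_insert, coe_singleton, Set.mem_insert_iff, Set.mem_singleton_iff] at hu hw
    rcases hu with rfl | rfl <;> rcases hw with rfl | rfl
    exacts [absurd huw G.irrefl, absurd huw hnab, absurd huw.symm hnab, absurd huw G.irrefl]
  have hT : G.PreconnectedOn T := by simpa [T, P] using hconn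
  let d (u : V) : ℕ := (G.induceOn T).dist u v
  obtain ⟨C', hC', -⟩ := hC.exists_extend (T := T) disjoint_sdiff d fun u hu => by
    have hsub : #{w ∈ T | G.Adj u w ∧ d u ≤ d w} ≤ #{w ∈ T | G.Adj u w} :=
      card_le_card (monotone_filter_right _ fun _ _ h => h.1)
    have := hsplit u
    have := hdeg u (mem_sdiff.1 hu).1
    obtain rfl | huv := eq_or_ne u v
    · have : #({w ∈ P | G.Adj u w}.image C) ≤ 1 := card_le_one.2 fun c₁ h₁ c₂ h₂ => by
        obtain ⟨_, _, rfl⟩ := mem_image.1 h₁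
        obtain ⟨_, _, rfl⟩ := mem_image.1 h₂
        rfl
      omega
    · obtain ⟨w, huw, hdw⟩ := (hT u hu v (by simp [T, P, hv, hva.ne, hvb.ne])).exists_adj_dist_lt huv
      obtain ⟨-, hw, huw⟩ := induceOn_adj.1 huw
      have : #{w ∈ T | G.Adj u w ∧ d u ≤ d w} < #{w ∈ T | G.Adj u w} := by
        refine card_lt_card ((ssubset_iff_of_subset (monotone_filter_right _ fun _ _ h => h.1)).2
          ⟨w, mem_filter.2 ⟨hw, huw⟩, fun h => ?_⟩)
        exact (mem_filter.1 h).2.2.not_gt hdw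
      have := card_image_le (s := {w ∈ P | G.Adj u w}) (f := C)
      omega
  exact ⟨C', by rwa [union_sdiff_of_subset hPs] at hC'⟩

theorem exists_isProperOn_of_cliqueFree {Δ : ℕ} (hΔ : 3 ≤ Δ) (hG : G.CliqueFree (Δ + 1))
    (s : Finset V) (hdeg : ∀ v ∈ s, #{w ∈ s | G.Adj v w} ≤ Δ) :
    ∃ C : V → Fin Δ, G.IsProperOn C s := by
  induction s using Finset.strongInduction with
  | H s ih =>
  replace ih (t) (ht : t ⊂ s) : ∃ C : V → Fin Δ, G.IsProperOn C t :=
    ih t ht fun v hv =>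
      (card_le_card (filter_subset_filter _ ht.subset)).trans (hdeg v (ht.subset hv))
  by_cases hlow : ∃ v ∈ s, #{w ∈ s | G.Adj v w} < Δ
  · obtain ⟨v, hv, hlt⟩ := hlow
    obtain ⟨C, hC⟩ := ih _ (erase_ssubset hv)
    obtain ⟨C', hC', -⟩ := hC.exists_insert (v := v) (card_image_le.trans_lt
      ((card_le_card (filter_subset_filter _ (erase_subset v s))).trans_lt hlt))
    exact ⟨C', by rwa [insert_erase hv] at hC'⟩
  have hreg (v) (hv : v ∈ s) : #{w ∈ s | G.Adj v w} = Δ :=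
    (hdeg v hv).antisymm (not_lt.1 fun h => hlow ⟨v, hv, h⟩)
  by_cases hcut : ∃ c ∈ s, ¬G.PreconnectedOn (↑s \ {c})
  · obtain ⟨c, -, hcut⟩ := hcut
    exact exists_isProperOn_of_not_preconnectedOn_sdiff hcut ih
  obtain rfl | ⟨v, hv⟩ := s.eq_empty_or_nonempty
  · exact ⟨fun _ => ⟨0, by omega⟩, by simp [IsProperOn]⟩
  obtain ⟨a, ha, b, hb, hva, hvb, hab, hnab⟩ := exists_adj_adj_not_adj hG (hreg v hv)
  obtain ⟨v, hv, a, ha, b, hb, hva, hvb, hab, hnab, hconn⟩ :=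
    exists_adj_adj_preconnectedOn_sdiff_pair (fun c hc => not_not.1 fun h => hcut ⟨c, hc, h⟩)
      (fun x hx => (hreg x hx).symm ▸ hΔ) hv ha hb hva hvb hab hnab
  exact exists_isProperOn_of_preconnectedOn_sdiff_pair hdeg hv ha hb hva hvb hab hnab hconn

end Brooks

end SimpleGraph

/-- Brooks' theorem, clique-free case: a graph with all degrees at most `Δ ≥ 3` and no
`K_{Δ+1}` subgraph is `Δ`-colorable. -/
theorem brooks_clique_free {V : Type*} (G : SimpleGraph V) (Δ : ℕ) (hΔ : 3 ≤ Δ)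
    (hfin : ∀ v : V, (G.neighborSet v).Finite)
    (hdeg : ∀ v : V, (G.neighborSet v).ncard ≤ Δ)
    (hclique : G.CliqueFree (Δ + 1)) :
    G.Colorable Δ := by
  classical
  refine SimpleGraph.nonempty_hom_of_forall_finite_subgraph_hom fun G' hG' => ?_
  have hC := SimpleGraph.exists_isProperOn_of_cliqueFree hΔ hclique hG'.toFinset fun v _ => by
    rw [← Set.ncard_coe_finset]
    refine (Set.ncard_le_ncard (fun w hw => ?_) (hfin v)).trans (hdeg v)
    exact (Finset.mem_filter.1 hw).2
  exact ⟨fun v => hC.choose v, fun h => hC.choose_spec (hG'.mem_toFinset.2 (G'.edge_vert h))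
    (hG'.mem_toFinset.2 (G'.edge_vert h.symm)) (G'.adj_sub h)⟩
end

section
/- If T₁, T₂, T₃ are triangles in the plane with pairwise disjoint interiors such that each pair shares an edge, then the three triangles share a common vertex, and the three shared edges all contain that common vertex. -/
open scoped Classical

/-- Three triangles with pairwise disjoint interiors pairwise sharing edges have a
common vertex, and each of the three shared edges contains that vertex. -/
theorem K3_common_vertex (V₁ V₂ V₃ : Finset (EuclideanSpace ℝ (Fin 2)))
    (h1 : IsTriangle V₁) (h2 : IsTriangle V₂) (h3 : IsTriangle V₃)
    (hd12 : Disjoint (interior (convexHull ℝ (V₁ : Set (EuclideanSpace ℝ (Fin 2)))))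
      (interior (convexHull ℝ (V₂ : Set (EuclideanSpace ℝ (Fin 2))))))
    (hd13 : Disjoint (interior (convexHull ℝ (V₁ : Set (EuclideanSpace ℝ (Fin 2)))))
      (interior (convexHull ℝ (V₃ : Set (EuclideanSpace ℝ (Fin 2))))))
    (hd23 : Disjoint (interior (convexHull ℝ (V₂ : Set (EuclideanSpace ℝ (Fin 2)))))
      (interior (convexHull ℝ (V₃ : Set (EuclideanSpace ℝ (Fin 2))))))
    (hs12 : SharesEdge V₁ V₂) (hs13 : SharesEdge V₁ V₃) (hs23 : SharesEdge V₂ V₃) :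
    ∃ p : EuclideanSpace ℝ (Fin 2),
      p ∈ V₁ ∩ V₂ ∧ p ∈ V₁ ∩ V₃ ∧ p ∈ V₂ ∩ V₃ := by
  have hsub : (V₁ ∩ V₂) ∪ (V₁ ∩ V₃) ⊆ V₁ := by
    intro x hx
    rcases Finset.mem_union.1 hx with h | h
    · exact (Finset.mem_inter.1 h).1
    · exact (Finset.mem_inter.1 h).1
  have hcard : ((V₁ ∩ V₂) ∪ (V₁ ∩ V₃)).card ≤ 3 := h1.1 ▸ Finset.card_le_card hsub
  have hie := Finset.card_union_add_card_inter (V₁ ∩ V₂) (V₁ ∩ V₃)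
  have h12 := hs12.1
  have h13 := hs13.1
  have hne : ((V₁ ∩ V₂) ∩ (V₁ ∩ V₃)).Nonempty := by
    rw [← Finset.card_pos]
    omega
  obtain ⟨p, hp⟩ := hne
  rw [Finset.mem_inter] at hp
  have hp1 := (Finset.mem_inter.1 hp.1).1
  have hp2 := (Finset.mem_inter.1 hp.1).2
  have hp3 := (Finset.mem_inter.1 hp.2).2
  exact ⟨p, hp.1, hp.2, Finset.mem_inter.2 ⟨hp2, hp3⟩⟩
end
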